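/- arXiv:1806.06966 — 15 statements merged into one kernel-verified Lean document; each statement's English description precedes it below -/
import Mathlib

section
/- If a graph G is proportionally k-choosable, then G is equitably k-choosable. -/
open Finset

/-- The multiplicity of a color `c` in a list assignment `L`: the number of
vertices whose list contains `c`. -/
def eta {V : Type*} [Fintype V] (L : V → Finset ℕ) (c : ℕ) : ℕ :=
  (Finset.univ.filter fun v => c ∈ L v).card

/-- `f` is a proportional `L`-coloring of `G` (with lists of size `k`): a proper
`L`-coloring in which each color `c` of the palette is used `⌊η(c)/k⌋` or `⌈η(c)/k⌉` times. -/
def IsProportionalColoring {V : Type*} [Fintype V] (G : SimpleGraph V) (k : ℕ)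
    (L : V → Finset ℕ) (f : V → ℕ) : Prop :=
  (∀ v, f v ∈ L v) ∧ (∀ u v, G.Adj u v → f u ≠ f v) ∧
  ∀ c, (∃ v, c ∈ L v) →
    (Finset.univ.filter fun v => f v = c).card = eta L c / k ∨
    (Finset.univ.filter fun v => f v = c).card = (eta L c + k - 1) / k

/-- `G` is proportionally `k`-choosable: every `k`-assignment admits a proportional coloring. -/
def ProportionallyChoosable {V : Type*} [Fintype V] (G : SimpleGraph V) (k : ℕ) : Prop :=
  ∀ L : V → Finset ℕ, (∀ v, (L v).card = k) → ∃ f : V → ℕ, IsProportionalColoring G k L f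

theorem stmt_1 {V : Type*} [Fintype V] (G : SimpleGraph V) (k : ℕ)
    (h : ProportionallyChoosable G k) :
    ∀ L : V → Finset ℕ, (∀ v, (L v).card = k) →
      ∃ f : V → ℕ, (∀ v, f v ∈ L v) ∧ (∀ u v, G.Adj u v → f u ≠ f v) ∧
        ∀ c : ℕ, (Finset.univ.filter fun v => f v = c).card ≤
          (Fintype.card V + k - 1) / k := by
  intro L hL
  obtain ⟨f, hf1, hf2, hf3⟩ := h L hL
  refine ⟨f, hf1, hf2, ?_⟩
  intro c
  by_cases hc : ∃ v, f v = c
  · obtain ⟨v, hv⟩ := hc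
    have hex : ∃ v, c ∈ L v := ⟨v, hv ▸ hf1 v⟩
    have heta : eta L c ≤ Fintype.card V := by
      classical
      exact le_of_le_of_eq (Finset.card_filter_le _ _) Finset.card_univ
    have hmain : (eta L c + k - 1) / k ≤ (Fintype.card V + k - 1) / k :=
      Nat.div_le_div_right (by omega)
    rcases hf3 c hex with h1 | h1
    · rw [h1]
      have h0 : eta L c / k ≤ (eta L c + k - 1) / k := by
        rcases Nat.eq_zero_or_pos k with hk | hk
        · simp [hk]
        · exact Nat.div_le_div_right (by omega)
      exact le_trans h0 hmain
    · rw [h1]; exact hmain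
  · push_neg at hc
    classical
    simp [Finset.filter_eq_empty_iff.mpr fun v _ => hc v]
end

section
/- Let L be a k-assignment for a graph G and let f be a proportional L-coloring of G. Writing η(c) = k·q_c + r_c with 0 ≤ r_c ≤ k−1 for each color c in the palette 𝓛 = ⋃_v L(v), the number of colors c ∈ 𝓛 with r_c > 0 that are used exactly ⌈η(c)/k⌉ times by f equals (1/k)·Σ_{c∈𝓛} r_c. -/
open Finset

/-
Count the vertices twice. Grouping them by color under `f` gives `|V| = ∑_c |f⁻¹(c)|`, where each
color class has `⌊η(c)/k⌋` elements, plus one exactly when `c` is almost excessive. Counting the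
pairs `(v, c)` with `c ∈ L(v)` gives `k |V| = ∑_c η(c) = k ∑_c ⌊η(c)/k⌋ + ∑_c r_c`. Comparing
the two expressions for `k |V|` leaves `k · #{almost excessive colors} = ∑_c r_c`.
-/

namespace Nat

theorem add_sub_one_div_eq {k : ℕ} (hk : 0 < k) (n : ℕ) :
    (n + k - 1) / k = n / k + if n % k = 0 then 0 else 1 := by
  have hpred : (k - 1) % k = k - 1 := Nat.mod_eq_of_lt (by omega)
  rw [Nat.add_sub_assoc hk, Nat.add_div hk, Nat.div_eq_of_lt (by omega : k - 1 < k), hpred]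
  split_ifs <;> omega

theorem eq_div_add_ite_of_eq_div_or_eq_ceil {m n k : ℕ} (hk : 0 < k)
    (h : m = n / k ∨ m = (n + k - 1) / k) :
    m = n / k + if n % k ≠ 0 ∧ m = (n + k - 1) / k then 1 else 0 := by
  rw [add_sub_one_div_eq hk] at h ⊢
  split_ifs at h ⊢ <;> omega

end Nat

section ListAssignment

variable {V : Type*} [Fintype V]

theorem sum_eta_eq_sum_card (L : V → Finset ℕ) :
    ∑ c ∈ univ.biUnion L, eta L c = ∑ v, (L v).card := by
  have hlist : ∀ v, (univ.biUnion L).bipartiteAbove (fun v c => c ∈ L v) v = L v := by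
    intro v
    ext c
    simp only [bipartiteAbove, mem_filter, mem_biUnion, mem_univ, true_and]
    exact ⟨And.right, fun hc => ⟨⟨v, hc⟩, hc⟩⟩
  calc ∑ c ∈ univ.biUnion L, eta L c
      = ∑ c ∈ univ.biUnion L, #(univ.bipartiteBelow (fun v c => c ∈ L v) c) := rfl
    _ = ∑ v, #((univ.biUnion L).bipartiteAbove (fun v c => c ∈ L v) v) :=
      (sum_card_bipartiteAbove_eq_sum_card_bipartiteBelow _).symm
    _ = ∑ v, #(L v) := by simp_rw [hlist]

theorem sum_card_fiber_eq_card {L : V → Finset ℕ} {f : V → ℕ} (hf : ∀ v, f v ∈ L v) :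
    ∑ c ∈ univ.biUnion L, #{v | f v = c} = Fintype.card V :=
  (card_eq_sum_card_fiberwise fun v _ => mem_biUnion.2 ⟨v, mem_univ v, hf v⟩).symm

end ListAssignment

theorem stmt_2 {V : Type*} [Fintype V] (G : SimpleGraph V) (k : ℕ) (hk : 0 < k)
    (L : V → Finset ℕ) (hL : ∀ v, (L v).card = k) (f : V → ℕ)
    (hf : IsProportionalColoring G k L f) :
    k * (((Finset.univ.biUnion L).filter fun c =>
            eta L c % k ≠ 0 ∧
            (Finset.univ.filter fun v => f v = c).card = (eta L c + k - 1) / k).card)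
      = ∑ c ∈ Finset.univ.biUnion L, eta L c % k := by
  obtain ⟨hmem, -, hcount⟩ := hf
  set S := univ.biUnion L
  have hclasses : Fintype.card V
      = ∑ c ∈ S, eta L c / k + #{c ∈ S | eta L c % k ≠ 0 ∧
          #{v | f v = c} = (eta L c + k - 1) / k} := by
    rw [← sum_card_fiber_eq_card hmem, ← Nat.cast_id #(filter _ S), ← sum_boole,
      ← sum_add_distrib]
    refine sum_congr rfl fun c hc => Nat.eq_div_add_ite_of_eq_div_or_eq_ceil hk (hcount c ?_)
    simpa [S] using hc
  have hpairs : k * Fintype.card V = ∑ c ∈ S, eta L c := by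
    simp [S, sum_eta_eq_sum_card, hL, mul_comm]
  have hdivmod : ∑ c ∈ S, eta L c = k * ∑ c ∈ S, eta L c / k + ∑ c ∈ S, eta L c % k := by
    rw [mul_sum, ← sum_add_distrib]
    exact sum_congr rfl fun c _ => (Nat.div_add_mod _ _).symm
  rw [hclasses, mul_add, hdivmod] at hpairs
  omega
end

section
/- Let G be a graph and L a k-multi-assignment for G (each vertex receives a multiset of k colors) such that every color has total multiplicity exactly k across all lists. Then for every vertex v₀ and every color c₀ ∈ L(v₀), there exists a function f assigning to each vertex v a color f(v) ∈ L(v) such that each color is used exactly once and f(v₀) = c₀. In particular, f is a proportional L-coloring of G. -/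
open Finset

theorem stmt_3 {V : Type*} [Fintype V] (G : SimpleGraph V) (k : ℕ)
    (L : V → Multiset ℕ) (hL : ∀ v, Multiset.card (L v) = k)
    (heta : ∀ c : ℕ, (∃ v, c ∈ L v) → (∑ v : V, (L v).count c) = k)
    (v₀ : V) (c₀ : ℕ) (hc₀ : c₀ ∈ L v₀) :
    ∃ f : V → ℕ, (∀ v, f v ∈ L v) ∧ f v₀ = c₀ ∧
      ∀ c : ℕ, (∃ v, c ∈ L v) → (Finset.univ.filter fun v => f v = c).card = 1 := by
  classical
  have hk : 1 ≤ k := by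
    rcases Nat.eq_zero_or_pos k with h | h
    · exfalso
      have h0 := hL v₀
      rw [h, Multiset.card_eq_zero] at h0
      rw [h0] at hc₀
      exact absurd hc₀ (Multiset.notMem_zero c₀)
    · exact h
  set t : V → Finset ℕ := fun v => if v = v₀ then {c₀} else ((L v).toFinset).erase c₀ with ht
  -- key counting lemma
  have key : ∀ S : Finset V, v₀ ∉ S →
      S.card ≤ (S.biUnion fun v => ((L v).toFinset).erase c₀).card := by
    intro S hS
    set U := S.biUnion fun v => ((L v).toFinset).erase c₀ with hU
    have hc₀U : c₀ ∉ U := by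
      simp [hU]
    have h1 : ∀ v ∈ S, k = (L v).count c₀ + ∑ c ∈ U, (L v).count c := by
      intro v hv
      have hsub : (L v).toFinset ⊆ insert c₀ U := by
        intro c hc
        rcases eq_or_ne c c₀ with rfl | hne
        · exact Finset.mem_insert_self _ _
        · exact Finset.mem_insert_of_mem (Finset.mem_biUnion.mpr ⟨v, hv, Finset.mem_erase.mpr ⟨hne, hc⟩⟩)
      have := Finset.sum_subset hsub (fun c _ hc =>
        Multiset.count_eq_zero.mpr (by simpa [Multiset.mem_toFinset] using hc))
      rw [Multiset.toFinset_sum_count_eq, hL v] at this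
      rw [this, Finset.sum_insert hc₀U]
    have h2 : k * S.card = (∑ v ∈ S, (L v).count c₀) + ∑ v ∈ S, ∑ c ∈ U, (L v).count c := by
      rw [← Finset.sum_add_distrib]
      rw [Finset.sum_congr rfl (fun v hv => (h1 v hv).symm)]
      rw [Finset.sum_const, smul_eq_mul, mul_comm]
    have h3 : (∑ v ∈ S, ∑ c ∈ U, (L v).count c) ≤ k * U.card := by
      rw [Finset.sum_comm]
      calc (∑ c ∈ U, ∑ v ∈ S, (L v).count c)
          ≤ ∑ c ∈ U, ∑ v : V, (L v).count c := by
            apply Finset.sum_le_sum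
            intro c hc
            exact Finset.sum_le_sum_of_subset (Finset.subset_univ S)
        _ = ∑ c ∈ U, k := by
            apply Finset.sum_congr rfl
            intro c hc
            obtain ⟨v, hv, hcv⟩ := Finset.mem_biUnion.mp hc
            exact heta c ⟨v, Multiset.mem_toFinset.mp (Finset.mem_erase.mp hcv).2⟩
        _ = k * U.card := by rw [Finset.sum_const, smul_eq_mul, mul_comm]
    have h4 : (∑ v ∈ S, (L v).count c₀) ≤ k - 1 := by
      have hins : (∑ v ∈ insert v₀ S, (L v).count c₀) ≤ ∑ v : V, (L v).count c₀ :=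
        Finset.sum_le_sum_of_subset (Finset.subset_univ _)
      rw [Finset.sum_insert hS, heta c₀ ⟨v₀, hc₀⟩] at hins
      have h5 : 1 ≤ (L v₀).count c₀ := Multiset.one_le_count_iff_mem.mpr hc₀
      omega
    by_contra hlt
    push_neg at hlt
    have h7 : k * (U.card + 1) ≤ k * S.card := Nat.mul_le_mul_left k hlt
    have hmul : k * (U.card + 1) = k * U.card + k := by ring
    omega
  have hall : ∀ S : Finset V, S.card ≤ (S.biUnion t).card := by
    intro S
    by_cases hv : v₀ ∈ S
    · set S' := S.erase v₀ with hS'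
      have hSv : v₀ ∉ S' := Finset.notMem_erase _ _
      have hUeq : S.biUnion t = insert c₀ (S'.biUnion fun v => ((L v).toFinset).erase c₀) := by
        rw [← Finset.insert_erase hv, Finset.biUnion_insert]
        have ha : t v₀ = {c₀} := by simp [ht]
        have hb : (S.erase v₀).biUnion t = S'.biUnion fun v => ((L v).toFinset).erase c₀ := by
          apply Finset.biUnion_congr rfl
          intro v hv'
          simp only [ht]
          rw [if_neg (Finset.ne_of_mem_erase hv')]
        rw [ha, hb, Finset.insert_eq]
      rw [hUeq]
      have hc₀U : c₀ ∉ (S'.biUnion fun v => ((L v).toFinset).erase c₀) := by simp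
      rw [Finset.card_insert_of_notMem hc₀U]
      have := key S' hSv
      have hcard : S.card = S'.card + 1 := by
        rw [hS', Finset.card_erase_of_mem hv]
        have : 1 ≤ S.card := Finset.card_pos.mpr ⟨v₀, hv⟩
        omega
      omega
    · have hUeq : S.biUnion t = S.biUnion fun v => ((L v).toFinset).erase c₀ := by
        apply Finset.biUnion_congr rfl
        intro v hv'
        simp only [ht]
        rw [if_neg (by rintro rfl; exact hv hv')]
      rw [hUeq]
      exact key S hv
  obtain ⟨f, hinj, hf⟩ := (Finset.all_card_le_biUnion_card_iff_exists_injective t).mp hall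
  have hfv₀ : f v₀ = c₀ := by
    have := hf v₀
    simp only [ht, if_pos rfl, Finset.mem_singleton] at this
    exact this
  have hmem : ∀ v, f v ∈ L v := by
    intro v
    by_cases h : v = v₀
    · subst h; rw [hfv₀]; exact hc₀
    · have := hf v
      simp only [ht, if_neg h] at this
      exact Multiset.mem_toFinset.mp (Finset.mem_erase.mp this).2
  refine ⟨f, hmem, hfv₀, ?_⟩
  -- palette
  set C : Finset ℕ := Finset.univ.biUnion fun v => (L v).toFinset with hC
  have hCcard : C.card = Fintype.card V := by
    have h1 : Fintype.card V * k = C.card * k := by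
      calc Fintype.card V * k = ∑ v : V, Multiset.card (L v) := by
            rw [Finset.sum_congr rfl (fun v _ => hL v), Finset.sum_const, smul_eq_mul,
              Finset.card_univ]
        _ = ∑ c ∈ C, ∑ v : V, (L v).count c := by
            rw [Finset.sum_comm]
            apply Finset.sum_congr rfl
            intro v _
            rw [← Multiset.toFinset_sum_count_eq (L v)]
            apply Finset.sum_subset
            · intro c hc
              exact Finset.mem_biUnion.mpr ⟨v, Finset.mem_univ v, hc⟩
            · intro c _ hc
              exact Multiset.count_eq_zero.mpr (by simpa [Multiset.mem_toFinset] using hc)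
        _ = C.card * k := by
            rw [Finset.sum_congr rfl (fun c hc => by
              obtain ⟨v, _, hcv⟩ := Finset.mem_biUnion.mp hc
              exact heta c ⟨v, Multiset.mem_toFinset.mp hcv⟩), Finset.sum_const, smul_eq_mul]
    exact (Nat.eq_of_mul_eq_mul_right hk h1).symm
  have himg : Finset.univ.image f = C := by
    apply Finset.eq_of_subset_of_card_le
    · intro c hc
      obtain ⟨v, _, rfl⟩ := Finset.mem_image.mp hc
      exact Finset.mem_biUnion.mpr ⟨v, Finset.mem_univ v, Multiset.mem_toFinset.mpr (hmem v)⟩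
    · rw [Finset.card_image_of_injective _ hinj, Finset.card_univ, hCcard]
  intro c ⟨v, hv⟩
  have hcC : c ∈ C := Finset.mem_biUnion.mpr ⟨v, Finset.mem_univ v, Multiset.mem_toFinset.mpr hv⟩
  rw [← himg] at hcC
  obtain ⟨w, _, hw⟩ := Finset.mem_image.mp hcC
  rw [Finset.card_eq_one]
  refine ⟨w, ?_⟩
  ext u
  simp only [Finset.mem_filter, Finset.mem_univ, true_and, Finset.mem_singleton]
  constructor
  · intro h; exact hinj (h.trans hw.symm)
  · rintro rfl; exact hw
end

section
/- If a graph G is proportionally k-choosable, then G is proportionally (k+1)-choosable. -/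
/-!
Given a `(k+1)`-assignment `L`, delete one colour `g v` from every list so that the remaining
`k`-assignment `L'` satisfies `k⌊η(c)/(k+1)⌋ ≤ η'(c) ≤ k⌈η(c)/(k+1)⌉`. Then
`⌊η(c)/(k+1)⌋ ≤ ⌊η'(c)/k⌋ ≤ ⌈η'(c)/k⌉ ≤ ⌈η(c)/(k+1)⌉`, and these bounds differ by at most one,
so a proportional `L'`-coloring is a proportional `L`-coloring.

The deletion must remove each colour `c` between `lo c` and `hi c` times. It is found by Hall's
theorem: the vertices, together with `∑ hi - |V|` dummy agents, are matched injectively into the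
slots `⟨c, i⟩` with `i < hi c`, where dummies may only take slots with `lo c ≤ i`. Since agents and
slots are equinumerous the matching is perfect, so the first `lo c` slots of every colour go to
real vertices. Hall's condition follows from double counting `∑ c, η(c) = (k+1)|V|`.
-/

open Finset

section FiberBounds

lemma disjoint_sigma_of_disjoint {α : Type*} {σ : α → Type*} {S T : Finset α} (h : Disjoint S T)
    (s t : ∀ a, Finset (σ a)) : Disjoint (S.sigma s) (T.sigma t) :=
  disjoint_left.2 fun _ hS hT => disjoint_left.1 h (mem_sigma.1 hS).1 (mem_sigma.1 hT).1

variable {V α : Type*} [Fintype V] [DecidableEq α]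

def slotChoices (L : V → Finset α) (lo hi : α → ℕ) (D : ℕ) :
    V ⊕ Fin D → Finset (Σ _ : α, ℕ) :=
  Sum.elim (fun v => (L v).sigma fun c => range (hi c))
    fun _ => (univ.biUnion L).sigma fun c => Ico (lo c) (hi c)

variable (L : V → Finset α) {lo hi : α → ℕ}

lemma card_le_card_biUnion_slotChoices (hlohi : ∀ c, lo c ≤ hi c)
    (hhi : ∀ A : Finset V, #A ≤ ∑ c ∈ A.biUnion L, hi c)
    (hlo : ∀ A : Finset V, ∑ c ∈ univ.biUnion L \ A.biUnion L, lo c ≤ Fintype.card V - #A)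
    (s : Finset (V ⊕ Fin (∑ c ∈ univ.biUnion L, hi c - Fintype.card V))) :
    #s ≤ #(s.biUnion (slotChoices L lo hi _)) := by
  set A := s.toLeft
  have hA : (A.biUnion L).sigma (fun c => range (hi c)) ⊆ s.biUnion (slotChoices L lo hi _) := by
    intro p hp
    obtain ⟨v, hv, hpv⟩ := mem_biUnion.1 (mem_sigma.1 hp).1
    exact mem_biUnion.2 ⟨.inl v, mem_toLeft.1 hv, mem_sigma.2 ⟨hpv, (mem_sigma.1 hp).2⟩⟩
  rcases s.toRight.eq_empty_or_nonempty with hR | ⟨d, hd⟩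
  · calc #s = #A := by rw [← card_toLeft_add_card_toRight (u := s), hR, card_empty, add_zero]
      _ ≤ ∑ c ∈ A.biUnion L, hi c := hhi A
      _ = #((A.biUnion L).sigma fun c => range (hi c)) := by simp [card_sigma]
      _ ≤ _ := card_le_card hA
  have hsub : (univ.biUnion L \ A.biUnion L).sigma (fun c => Ico (lo c) (hi c)) ⊆
      s.biUnion (slotChoices L lo hi _) := fun p hp =>
    mem_biUnion.2 ⟨.inr d, mem_toRight.1 hd, mem_sigma.2 ⟨sdiff_subset (mem_sigma.1 hp).1,
      (mem_sigma.1 hp).2⟩⟩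
  have hsplit := sum_sdiff (f := hi) (biUnion_subset_biUnion_of_subset_left L (subset_univ A))
  have hopt := sum_tsub_distrib (univ.biUnion L \ A.biUnion L) (fun c _ => hlohi c)
  have hR : #s.toRight ≤ ∑ c ∈ univ.biUnion L, hi c - Fintype.card V :=
    (card_le_univ _).trans_eq (Fintype.card_fin _)
  have hloA := hlo A
  have hAV := card_le_univ A
  have hV := card_univ (α := V) ▸ hhi univ
  calc #s = #A + #s.toRight := (card_toLeft_add_card_toRight (u := s)).symm
    _ ≤ ∑ c ∈ A.biUnion L, hi c + ∑ c ∈ univ.biUnion L \ A.biUnion L, (hi c - lo c) := by omega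
    _ = #((A.biUnion L).sigma (fun c => range (hi c)) ∪
          (univ.biUnion L \ A.biUnion L).sigma fun c => Ico (lo c) (hi c)) := by
        rw [card_union_of_disjoint (disjoint_sigma_of_disjoint disjoint_sdiff _ _)]
        simp [card_sigma]
    _ ≤ _ := card_le_card (union_subset hA hsub)

lemma image_eq_of_injective_of_mem_slotChoices
    (hV : Fintype.card V ≤ ∑ c ∈ univ.biUnion L, hi c)
    {F : V ⊕ Fin (∑ c ∈ univ.biUnion L, hi c - Fintype.card V) → Σ _ : α, ℕ}
    (hFinj : F.Injective) (hFmem : ∀ x, F x ∈ slotChoices L lo hi _ x) :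
    univ.image F = (univ.biUnion L).sigma fun c => range (hi c) := by
  refine eq_of_subset_of_card_le ?_ ?_
  · simp only [image_subset_iff, mem_univ, true_implies]
    rintro (v | d)
    · obtain ⟨hc, hslot⟩ := mem_sigma.1 (hFmem (.inl v))
      exact mem_sigma.2 ⟨mem_biUnion.2 ⟨v, mem_univ v, hc⟩, hslot⟩
    · obtain ⟨hc, hslot⟩ := mem_sigma.1 (hFmem (.inr d))
      exact mem_sigma.2 ⟨hc, mem_range.2 (mem_Ico.1 hslot).2⟩
  · rw [card_image_of_injective _ hFinj, card_univ, Fintype.card_sum, Fintype.card_fin]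
    simp only [card_sigma, card_range]
    omega

theorem exists_forall_mem_and_card_fiber_bounds (hlohi : ∀ c, lo c ≤ hi c)
    (hhi : ∀ A : Finset V, #A ≤ ∑ c ∈ A.biUnion L, hi c)
    (hlo : ∀ A : Finset V, ∑ c ∈ univ.biUnion L \ A.biUnion L, lo c ≤ Fintype.card V - #A) :
    ∃ g : V → α, (∀ v, g v ∈ L v) ∧ (∀ c, #{v | g v = c} ≤ hi c) ∧
      ∀ c ∈ univ.biUnion L, lo c ≤ #{v | g v = c} := by
  obtain ⟨F, hFinj, hFmem⟩ := (all_card_le_biUnion_card_iff_exists_injective _).1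
    (card_le_card_biUnion_slotChoices L hlohi hhi hlo)
  have himage := image_eq_of_injective_of_mem_slotChoices L
    (card_univ (α := V) ▸ hhi univ) hFinj hFmem
  have hvert v : F (.inl v) ∈ (L v).sigma fun c => range (hi c) := hFmem (.inl v)
  refine ⟨fun v => (F (.inl v)).1, fun v => (mem_sigma.1 (hvert v)).1, fun c => ?_, fun c hc => ?_⟩
  · refine (card_le_card_of_injOn (fun v => (F (.inl v)).2) (t := range (hi c)) ?_ ?_).trans_eq
      (card_range _)
    · intro v hv
      rw [mem_coe, mem_filter_univ] at hv
      exact hv ▸ (mem_sigma.1 (hvert v)).2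
    · intro v hv w hw hvw
      rw [mem_coe, mem_filter_univ] at hv hw
      exact Sum.inl_injective (hFinj (Sigma.ext (hv.trans hw.symm) (heq_of_eq hvw)))
  · refine (card_range _).symm.trans_le (card_le_card_of_surjOn (fun v => (F (.inl v)).2) ?_)
    intro i hil
    rw [coe_range, Set.mem_Iio] at hil
    obtain ⟨x, -, hx⟩ := mem_image.1 (himage ▸ mem_sigma.2 ⟨hc, mem_range.2 (hil.trans_le
      (hlohi c))⟩ : (⟨c, i⟩ : Σ _ : α, ℕ) ∈ univ.image F)
    rcases x with v | d
    · exact ⟨v, by simp [hx], by simp [hx]⟩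
    · have hslot := hFmem (.inr d)
      rw [hx] at hslot
      exact absurd (mem_Ico.1 (mem_sigma.1 hslot).2).1 (not_le.2 hil)

end FiberBounds

section Arithmetic

variable (k η : ℕ)

lemma le_succ_mul_sub_mul_div : η ≤ (k + 1) * (η - k * (η / (k + 1))) := by
  have h := Nat.div_add_mod η (k + 1)
  generalize η / (k + 1) = q at h ⊢
  generalize η % (k + 1) = r at h
  subst h
  rw [add_mul, one_mul, add_assoc, Nat.add_sub_cancel_left, mul_add]
  nlinarith

lemma succ_mul_sub_mul_ceil_le : (k + 1) * (η - k * ((η + k) / (k + 1))) ≤ η := by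
  have h1 := Nat.div_mul_le_self (η + k) (k + 1)
  have h2 := Nat.lt_div_mul_add (a := η + k) (b := k + 1) (by omega)
  rcases le_total η (k * ((η + k) / (k + 1))) with h | h
  · simp [Nat.sub_eq_zero_of_le h]
  · zify [h]; nlinarith

lemma sub_mul_ceil_le_sub_mul_div : η - k * ((η + k) / (k + 1)) ≤ η - k * (η / (k + 1)) :=
  Nat.sub_le_sub_left (Nat.mul_le_mul_left k (Nat.div_le_div_right (Nat.le_add_right η k))) η

variable {k η}

lemma eq_div_or_eq_ceil_div_succ {η' x : ℕ} (hk : 0 < k) (hlow : k * (η / (k + 1)) ≤ η')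
    (hup : η' ≤ k * ((η + k) / (k + 1))) (hx : x = η' / k ∨ x = (η' + k - 1) / k) :
    x = η / (k + 1) ∨ x = (η + (k + 1) - 1) / (k + 1) := by
  have hfloor : η / (k + 1) ≤ η' / k := (Nat.le_div_iff_mul_le hk).2 (by linarith)
  have hceil : (η' + k - 1) / k ≤ (η + k) / (k + 1) := by
    rw [Nat.div_le_iff_le_mul_add_pred hk]; omega
  have hceil_le : (η + k) / (k + 1) ≤ η / (k + 1) + 1 := by
    rw [← Nat.add_div_right η (Nat.succ_pos k)]
    exact Nat.div_le_div_right (by omega)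
  have hmono : η' / k ≤ (η' + k - 1) / k := Nat.div_le_div_right (by omega)
  rw [show η + (k + 1) - 1 = η + k by omega]
  omega

end Arithmetic

section Eta

variable {V : Type*} [Fintype V] (L : V → Finset ℕ)

lemma sum_eta_eq_sum_card_inter (S : Finset ℕ) : ∑ c ∈ S, eta L c = ∑ v, #(L v ∩ S) := by
  simp_rw [eta, card_filter, inter_comm (L _), ← filter_mem_eq_inter, card_filter]
  exact sum_comm

variable {m : ℕ}

lemma mul_card_le_sum_eta_biUnion (hL : ∀ v, #(L v) = m) (A : Finset V) :
    m * #A ≤ ∑ c ∈ A.biUnion L, eta L c := by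
  rw [sum_eta_eq_sum_card_inter, mul_comm, ← smul_eq_mul, ← sum_const]
  calc ∑ v ∈ A, m = ∑ v ∈ A, #(L v ∩ A.biUnion L) :=
        sum_congr rfl fun v hv => by rw [inter_eq_left.2 (subset_biUnion_of_mem L hv), hL]
    _ ≤ _ := sum_le_sum_of_subset (subset_univ A)

lemma sum_eta_le_mul_card_sub (hL : ∀ v, #(L v) = m) {A : Finset V} {S : Finset ℕ}
    (hS : Disjoint S (A.biUnion L)) : ∑ c ∈ S, eta L c ≤ m * (Fintype.card V - #A) := by
  classical
  rw [sum_eta_eq_sum_card_inter, ← sum_sdiff (subset_univ A), ← card_univ, ← card_sdiff_of_subset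
    (subset_univ A), mul_comm, ← smul_eq_mul, ← sum_const]
  have hA : ∑ v ∈ A, #(L v ∩ S) = 0 := sum_eq_zero fun v hv => card_eq_zero.2 <|
    disjoint_iff_inter_eq_empty.1 (hS.symm.mono_left (subset_biUnion_of_mem L hv))
  rw [hA, add_zero]
  exact sum_le_sum fun v _ => (card_le_card inter_subset_left).trans_eq (hL v)

end Eta

section Deletion

variable {V : Type*} [Fintype V]

lemma eta_erase (L : V → Finset ℕ) {g : V → ℕ} (hg : ∀ v, g v ∈ L v) (c : ℕ) :
    eta (fun v => (L v).erase (g v)) c = eta L c - #{v | g v = c} := by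
  classical
  have hsub : ({v | g v = c} : Finset V) ⊆ ({v | c ∈ L v} : Finset V) := fun v hv => by
    rw [mem_filter_univ] at hv ⊢
    exact hv ▸ hg v
  rw [eta, eta, ← card_sdiff_of_subset hsub]
  congr 1
  ext v
  simp only [mem_filter_univ, mem_sdiff, mem_erase]
  exact ⟨fun ⟨hne, hc⟩ => ⟨hc, Ne.symm hne⟩, fun ⟨hc, hne⟩ => ⟨Ne.symm hne, hc⟩⟩

theorem exists_erase_eta_bounds {k : ℕ} (L : V → Finset ℕ) (hL : ∀ v, #(L v) = k + 1) :
    ∃ g : V → ℕ, (∀ v, g v ∈ L v) ∧ ∀ c, (∃ v, c ∈ L v) →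
      k * (eta L c / (k + 1)) ≤ eta (fun v => (L v).erase (g v)) c ∧
      eta (fun v => (L v).erase (g v)) c ≤ k * ((eta L c + k) / (k + 1)) := by
  obtain ⟨g, hgL, hhi, hlo⟩ := exists_forall_mem_and_card_fiber_bounds L
    (lo := fun c => eta L c - k * ((eta L c + k) / (k + 1)))
    (hi := fun c => eta L c - k * (eta L c / (k + 1)))
    (fun c => sub_mul_ceil_le_sub_mul_div k (eta L c))
    (fun A => Nat.le_of_mul_le_mul_left ((mul_card_le_sum_eta_biUnion L hL A).trans <| by
      rw [mul_sum]; exact sum_le_sum fun c _ => le_succ_mul_sub_mul_div k _) k.succ_pos)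
    (fun A => Nat.le_of_mul_le_mul_left (by
      rw [mul_sum]
      exact (sum_le_sum fun c _ => succ_mul_sub_mul_ceil_le k _).trans
        (sum_eta_le_mul_card_sub L hL sdiff_disjoint)) k.succ_pos)
  refine ⟨g, hgL, fun c ⟨v, hv⟩ => ?_⟩
  have hfloor : k * (eta L c / (k + 1)) ≤ eta L c :=
    (Nat.mul_le_mul_right _ k.le_succ).trans (Nat.mul_div_le _ _)
  have hdel_le := hhi c
  have hle_del := hlo c (mem_biUnion.2 ⟨v, mem_univ v, hv⟩)
  rw [eta_erase L hgL]
  omega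

end Deletion

section Coloring

variable {V : Type*} [Fintype V] {G : SimpleGraph V}

lemma IsProportionalColoring.card_fiber {k : ℕ} {L : V → Finset ℕ} {f : V → ℕ}
    (hf : IsProportionalColoring G k L f) (c : ℕ) :
    #{v | f v = c} = eta L c / k ∨ #{v | f v = c} = (eta L c + k - 1) / k := by
  by_cases hc : ∃ v, c ∈ L v
  · exact hf.2.2 c hc
  simp only [not_exists] at hc
  have hfiber : ({v | f v = c} : Finset V) = ∅ :=
    filter_eq_empty_iff.2 fun v _ hfv => hc v (hfv ▸ hf.1 v)
  have heta : eta L c = 0 := card_eq_zero.2 (filter_eq_empty_iff.2 fun v _ => hc v)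
  left
  rw [hfiber, heta, card_empty, Nat.zero_div]

lemma isEmpty_of_proportionallyChoosable_zero (h : ProportionallyChoosable G 0) : IsEmpty V := by
  obtain ⟨f, hf, -⟩ := h (fun _ => ∅) fun _ => card_empty
  exact ⟨fun v => notMem_empty _ (hf v)⟩

lemma proportionallyChoosable_of_isEmpty [IsEmpty V] (G : SimpleGraph V) (k : ℕ) :
    ProportionallyChoosable G k :=
  fun _ _ => ⟨fun _ => 0, isEmptyElim, isEmptyElim, fun _ ⟨v, _⟩ => isEmptyElim v⟩

end Coloring

theorem stmt_5 {V : Type*} [Fintype V] (G : SimpleGraph V) (k : ℕ)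
    (h : ProportionallyChoosable G k) : ProportionallyChoosable G (k + 1) := by
  rcases Nat.eq_zero_or_pos k with rfl | hk
  · have := isEmpty_of_proportionallyChoosable_zero h
    exact proportionallyChoosable_of_isEmpty G 1
  intro L hL
  obtain ⟨g, hgL, hbounds⟩ := exists_erase_eta_bounds L hL
  obtain ⟨f, hf⟩ := h (fun v => (L v).erase (g v)) fun v => by
    rw [card_erase_of_mem (hgL v), hL v, Nat.add_sub_cancel]
  refine ⟨f, fun v => mem_of_mem_erase (hf.1 v), hf.2.1, fun c hc => ?_⟩
  obtain ⟨hlow, hup⟩ := hbounds c hc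
  exact eq_div_or_eq_ceil_div_succ hk hlow hup (hf.card_fiber c)
end

section
/- If H is a subgraph of G and G is proportionally k-choosable, then H is proportionally k-choosable. -/
open Finset

/- Give every vertex of `G` outside the copy of `H` a list of `k` colors that occur in no list
of `H`. A proportional coloring of `G` for this assignment restricts to one of `H`: the colors
of `H` are used only on the copy of `H`, so neither their multiplicities nor how often they are
used change under the restriction. -/

theorem Finset.card_filter_comp_of_injective {V W : Type*} [Fintype V] [Fintype W] {φ : W → V}
    (hφ : Function.Injective φ) (P : V → Prop) [DecidablePred P]
    (hP : ∀ v, P v → v ∈ Set.range φ) :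
    #(univ.filter fun w => P (φ w)) = #(univ.filter P) := by
  rw [← card_map ⟨φ, hφ⟩]
  congr 1
  ext v
  simp only [mem_map, mem_filter, mem_univ, true_and, Function.Embedding.coeFn_mk]
  constructor
  · rintro ⟨w, hw, rfl⟩
    exact hw
  · intro hv
    obtain ⟨w, rfl⟩ := hP v hv
    exact ⟨w, hv, rfl⟩

theorem Finset.exists_card_eq_forall_disjoint {α W : Type*} [Infinite α] [Fintype W]
    (L : W → Finset α) (k : ℕ) : ∃ S : Finset α, #S = k ∧ ∀ w, Disjoint S (L w) := by
  classical
  obtain ⟨S, hS, hcard⟩ :=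
    ((univ.biUnion L).finite_toSet.infinite_compl).exists_subset_card_eq k
  refine ⟨S, hcard, fun w => disjoint_left.2 fun c hcS hcL => hS hcS ?_⟩
  exact mem_coe.2 (mem_biUnion.2 ⟨w, mem_univ w, hcL⟩)

theorem IsProportionalColoring.comap {V W : Type*} [Fintype V] [Fintype W] {G : SimpleGraph V}
    {H : SimpleGraph W} {φ : W → V} (hφ : Function.Injective φ)
    (hadj : ∀ u v, H.Adj u v → G.Adj (φ u) (φ v)) {k : ℕ} {L' : V → Finset ℕ}
    {L : W → Finset ℕ} (hrestrict : ∀ w, L' (φ w) = L w)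
    (hrange : ∀ v c, c ∈ L' v → (∃ w, c ∈ L w) → v ∈ Set.range φ) {f : V → ℕ}
    (hf : IsProportionalColoring G k L' f) : IsProportionalColoring H k L (f ∘ φ) := by
  obtain ⟨hfL, hproper, hprop⟩ := hf
  refine ⟨fun w => hrestrict w ▸ hfL (φ w), fun u v huv => hproper _ _ (hadj u v huv), ?_⟩
  rintro c ⟨w, hcw⟩
  have heta : eta L' c = eta L c := by
    simp only [eta, ← hrestrict]
    exact (card_filter_comp_of_injective hφ _ fun v hv => hrange v c hv ⟨w, hcw⟩).symm
  have hcount : #(univ.filter fun v => f (φ v) = c) = #(univ.filter fun v => f v = c) :=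
    card_filter_comp_of_injective hφ (fun v => f v = c) fun v hv =>
      hrange v c (hv ▸ hfL v) ⟨w, hcw⟩
  simpa only [Function.comp_apply, hcount, heta] using
    hprop c ⟨φ w, (hrestrict w).symm ▸ hcw⟩

/-- If `H` is (isomorphic to) a subgraph of `G`, i.e. there is an injective map
`φ` from `V(H)` to `V(G)` carrying edges of `H` to edges of `G`, and `G` is
proportionally `k`-choosable, then so is `H`. -/
theorem stmt_6 {V W : Type*} [Fintype V] [Fintype W] (G : SimpleGraph V)
    (H : SimpleGraph W) (φ : W → V) (hφ : Function.Injective φ)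
    (hadj : ∀ u v, H.Adj u v → G.Adj (φ u) (φ v)) (k : ℕ)
    (h : ProportionallyChoosable G k) : ProportionallyChoosable H k := by
  intro L hL
  obtain ⟨S, hS, hfresh⟩ := exists_card_eq_forall_disjoint L k
  set L' : V → Finset ℕ := Function.extend φ L fun _ => S
  have hrestrict : ∀ w, L' (φ w) = L w := hφ.extend_apply L _
  have houtside : ∀ v, v ∉ Set.range φ → L' v = S := Function.extend_apply' _ _
  have hrange : ∀ v c, c ∈ L' v → (∃ w, c ∈ L w) → v ∈ Set.range φ := by
    rintro v c hc ⟨w, hcw⟩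
    by_contra hv
    exact disjoint_left.1 (hfresh w) (houtside v hv ▸ hc) hcw
  have hcard : ∀ v, #(L' v) = k := by
    intro v
    by_cases hv : v ∈ Set.range φ
    · obtain ⟨w, rfl⟩ := hv
      rw [hrestrict, hL]
    · rw [houtside v hv, hS]
  obtain ⟨f, hf⟩ := h L' hcard
  exact ⟨f ∘ φ, hf.comap hφ hadj hrestrict hrange⟩
end

section
/- Every graph G on n vertices is proportionally n-choosable; i.e., the proportional choice number of G is at most |V(G)|. -/
open Finset

theorem stmt_7 {V : Type*} [Fintype V] (G : SimpleGraph V) :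
    ProportionallyChoosable G (Fintype.card V) := by
  classical
  intro L hL
  set n := Fintype.card V with hn
  rcases Nat.eq_zero_or_pos n with h0 | hpos
  · have hempty : IsEmpty V := Fintype.card_eq_zero_iff.mp h0
    exact ⟨fun _ => 0, fun v => (hempty.false v).elim, fun u _ _ => (hempty.false u).elim,
      fun c hc => (hempty.false hc.choose).elim⟩
  have hneV : Nonempty V := Fintype.card_pos_iff.mp hpos
  obtain ⟨v₀⟩ := hneV
  -- the set of "full" colors, appearing in every list
  set F : Finset ℕ := (L v₀).filter (fun c => ∀ v, c ∈ L v) with hF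
  have hFmem : ∀ c ∈ F, ∀ v, c ∈ L v := fun c hc => (mem_filter.mp hc).2
  have hFsub : ∀ v, F ⊆ L v := fun v c hc => hFmem c hc v
  have hFcard : F.card ≤ n := le_trans (card_le_card (hFsub v₀)) (hL v₀).le
  have hembNe : Nonempty (↥F ↪ V) := by
    apply Function.Embedding.nonempty_of_card_le
    simpa [Fintype.card_coe] using hFcard
  obtain ⟨e⟩ := hembNe
  -- special vertices: images of e
  set P : V → Prop := fun v => ∃ c : ↥F, e c = v with hP
  set inv : V → ℕ := fun v => if h : P v then ((Classical.choose h : ↥F) : ℕ) else 0 with hinvdef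
  have hinv : ∀ c : ↥F, inv (e c) = (c : ℕ) := by
    intro c
    have h : P (e c) := ⟨c, rfl⟩
    have hc : Classical.choose h = c := e.injective (Classical.choose_spec h)
    simp only [hinvdef, dif_pos h, hc]
  have hinvF : ∀ v, P v → inv v ∈ F := by
    intro v h
    simp only [hinvdef, dif_pos h, Finset.coe_mem]
  have hinvinj : ∀ v w, P v → P w → inv v = inv w → v = w := by
    intro v w hv hw hvw
    have h1 : e (Classical.choose hv) = v := Classical.choose_spec hv
    have h2 : e (Classical.choose hw) = w := Classical.choose_spec hw
    have : Classical.choose hv = Classical.choose hw := by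
      apply Subtype.ext
      simpa only [hinvdef, dif_pos hv, dif_pos hw] using hvw
    rw [← h1, ← h2, this]
  -- the modified lists
  set L' : V → Finset ℕ := fun v => if P v then {inv v} else L v \ F with hL'
  have hL'sub : ∀ v, L' v ⊆ L v := by
    intro v c hc
    by_cases h : P v
    · simp only [hL', if_pos h, mem_singleton] at hc
      subst hc
      exact hFsub v (hinvF v h)
    · simp only [hL', if_neg h] at hc
      exact (mem_sdiff.mp hc).1
  -- the set of special vertices has cardinality F.card
  have hspecial : (univ.filter P).card = F.card := by
    have himg : univ.filter P = F.attach.image (fun c => e c) := by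
      ext v
      simp only [mem_filter, mem_univ, true_and, mem_image, mem_attach, hP]
    rw [himg, card_image_of_injective _ e.injective, card_attach]
  -- Hall's condition
  have hall : ∀ s : Finset V, s.card ≤ (s.biUnion L').card := by
    intro s
    set s₁ := s.filter P with hs₁
    set s₂ := s.filter (fun v => ¬ P v) with hs₂
    have hcards : s₁.card + s₂.card = s.card := card_filter_add_card_filter_not _
    have hsub1 : s₁.biUnion L' ⊆ s.biUnion L' := biUnion_subset_biUnion_of_subset_left _ (filter_subset _ _)
    have hsub2 : s₂.biUnion L' ⊆ s.biUnion L' := biUnion_subset_biUnion_of_subset_left _ (filter_subset _ _)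
    have hunion : s.biUnion L' = s₁.biUnion L' ∪ s₂.biUnion L' := by
      apply Subset.antisymm
      · intro c hc
        obtain ⟨v, hv, hcv⟩ := mem_biUnion.mp hc
        by_cases h : P v
        · exact mem_union_left _ (mem_biUnion.mpr ⟨v, mem_filter.mpr ⟨hv, h⟩, hcv⟩)
        · exact mem_union_right _ (mem_biUnion.mpr ⟨v, mem_filter.mpr ⟨hv, h⟩, hcv⟩)
      · exact union_subset hsub1 hsub2
    have h1F : s₁.biUnion L' ⊆ F := by
      intro c hc
      obtain ⟨v, hv, hcv⟩ := mem_biUnion.mp hc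
      have hPv := (mem_filter.mp hv).2
      simp only [hL', if_pos hPv, mem_singleton] at hcv
      subst hcv
      exact hinvF v hPv
    have h2F : Disjoint (s₂.biUnion L') F := by
      rw [disjoint_left]
      intro c hc
      obtain ⟨v, hv, hcv⟩ := mem_biUnion.mp hc
      have hPv := (mem_filter.mp hv).2
      simp only [hL', if_neg hPv] at hcv
      exact (mem_sdiff.mp hcv).2
    have hdisj : Disjoint (s₁.biUnion L') (s₂.biUnion L') :=
      Disjoint.mono_left h1F h2F.symm
    have hc1 : s₁.card ≤ (s₁.biUnion L').card := by
      have himg : s₁.image inv ⊆ s₁.biUnion L' := by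
        intro c hc
        obtain ⟨v, hv, rfl⟩ := mem_image.mp hc
        have hPv := (mem_filter.mp hv).2
        exact mem_biUnion.mpr ⟨v, hv, by simp [hL', if_pos hPv]⟩
      calc s₁.card = (s₁.image inv).card := by
            rw [card_image_of_injOn]
            intro v hv w hw hvw
            exact hinvinj v w (mem_filter.mp hv).2 (mem_filter.mp hw).2 hvw
        _ ≤ (s₁.biUnion L').card := card_le_card himg
    have hc2 : s₂.card ≤ (s₂.biUnion L').card := by
      rcases s₂.eq_empty_or_nonempty with h | ⟨v, hv⟩
      · simp [h]
      · have hPv := (mem_filter.mp hv).2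
        have hsub : L v \ F ⊆ s₂.biUnion L' := by
          intro c hc
          exact mem_biUnion.mpr ⟨v, hv, by simp only [hL', if_neg hPv]; exact hc⟩
        have hcardLF : (L v \ F).card = n - F.card := by
          rw [card_sdiff_of_subset (hFsub v), hL v]
        have hs2le : s₂.card ≤ n - F.card := by
          have : s₂ ⊆ univ.filter (fun v => ¬ P v) := by
            intro w hw
            exact mem_filter.mpr ⟨mem_univ _, (mem_filter.mp hw).2⟩
          have h2 := card_le_card this
          have h3 : (univ.filter (fun v => ¬ P v)).card = n - F.card := by
            have h5 := card_filter_add_card_filter_not (s := (univ : Finset V)) (p := P)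
            have h6 : (univ : Finset V).card = n := by rw [Finset.card_univ, ← hn]
            omega
          omega
        calc s₂.card ≤ n - F.card := hs2le
          _ = (L v \ F).card := hcardLF.symm
          _ ≤ (s₂.biUnion L').card := card_le_card hsub
    calc s.card = s₁.card + s₂.card := hcards.symm
      _ ≤ (s₁.biUnion L').card + (s₂.biUnion L').card := Nat.add_le_add hc1 hc2
      _ = ((s₁.biUnion L') ∪ (s₂.biUnion L')).card := (card_union_of_disjoint hdisj).symm
      _ = (s.biUnion L').card := by rw [← hunion]
  obtain ⟨f, hfinj, hfmem⟩ := (Finset.all_card_le_biUnion_card_iff_exists_injective L').mp hall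
  refine ⟨f, fun v => hL'sub v (hfmem v), fun u v huv => fun h => G.ne_of_adj huv (hfinj h), ?_⟩
  intro c hc
  obtain ⟨w, hw⟩ := hc
  -- basic facts about eta
  have heta_le : eta L c ≤ n := by
    unfold eta
    calc (univ.filter fun v => c ∈ L v).card ≤ (univ : Finset V).card := card_le_card (filter_subset _ _)
      _ = n := by rw [Finset.card_univ, ← hn]
  have heta_pos : 1 ≤ eta L c := by
    apply card_pos.mpr
    exact ⟨w, mem_filter.mpr ⟨mem_univ _, hw⟩⟩
  have hcount_le : (univ.filter fun v => f v = c).card ≤ 1 := by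
    apply card_le_one.mpr
    intro a ha b hb
    apply hfinj
    rw [(mem_filter.mp ha).2, (mem_filter.mp hb).2]
  by_cases hcF : c ∈ F
  · -- c is full: eta = n and it is used exactly once
    left
    have heta_eq : eta L c = n := by
      unfold eta
      have : (univ.filter fun v => c ∈ L v) = univ := by
        apply filter_true_of_mem
        intro v _
        exact hFmem c hcF v
      rw [this, Finset.card_univ, ← hn]
    have hmemfib : e ⟨c, hcF⟩ ∈ univ.filter fun v => f v = c := by
      refine mem_filter.mpr ⟨mem_univ _, ?_⟩
      have hPv : P (e ⟨c, hcF⟩) := ⟨⟨c, hcF⟩, rfl⟩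
      have := hfmem (e ⟨c, hcF⟩)
      simp only [hL', if_pos hPv, mem_singleton, hinv ⟨c, hcF⟩] at this
      exact this
    have hpos1 : 1 ≤ (univ.filter fun v => f v = c).card := card_pos.mpr ⟨_, hmemfib⟩
    have : (univ.filter fun v => f v = c).card = 1 := le_antisymm hcount_le hpos1
    rw [this, heta_eq, Nat.div_self hpos]
  · -- c is not full: eta < n
    have heta_lt : eta L c < n := by
      rcases lt_or_eq_of_le heta_le with h | h
      · exact h
      · exfalso
        apply hcF
        have : (univ.filter fun v => c ∈ L v) = univ := by
          apply eq_of_subset_of_card_le (subset_univ _)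
          unfold eta at h
          rw [h, Finset.card_univ, ← hn]
        have hall' : ∀ v, c ∈ L v := by
          intro v
          have := mem_filter.mp (this ▸ mem_univ v)
          exact this.2
        exact mem_filter.mpr ⟨hall' v₀, hall'⟩
    rcases Nat.le_one_iff_eq_zero_or_eq_one.mp hcount_le with h | h
    · left
      rw [h, Nat.div_eq_of_lt heta_lt]
    · right
      rw [h]
      symm
      have h1 : 1 * n ≤ eta L c + n - 1 := by omega
      have h2 : eta L c + n - 1 < (1 + 1) * n := by omega
      exact Nat.div_eq_of_lt_le h1 h2
end

section
/- If G is a graph on k+1 vertices that is not the complete graph K_{k+1}, then G is proportionally k-choosable. -/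
open Finset

lemma exchange_aux {V : Type*} [Fintype V] [DecidableEq V] (L : V → Finset ℕ) (S : Finset ℕ)
    (φ : ℕ → V) (hφmem : ∀ c ∈ S, c ∈ L (φ c)) (hφinj : Set.InjOn φ ↑S) :
    ∀ (m : ℕ) (M : V → ℕ), Function.Injective M → (∀ v, M v ∈ L v) →
      (S.filter fun c => ∀ v, M v ≠ c).card ≤ m →
      ∃ M', Function.Injective M' ∧ (∀ v, M' v ∈ L v) ∧ ∀ c ∈ S, ∃ v, M' v = c := by
  classical
  intro m
  induction m with
  | zero =>
    intro M hMinj hMmem hc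
    refine ⟨M, hMinj, hMmem, fun c hcS => ?_⟩
    by_contra h
    push_neg at h
    have : c ∈ S.filter fun c => ∀ v, M v ≠ c := mem_filter.mpr ⟨hcS, h⟩
    have := card_pos.mpr ⟨c, this⟩
    omega
  | succ m ih =>
    intro M hMinj hMmem hc
    rcases (S.filter fun c => ∀ v, M v ≠ c).eq_empty_or_nonempty with hemp | ⟨c0, hc0⟩
    · refine ⟨M, hMinj, hMmem, fun c hcS => ?_⟩
      by_contra h
      push_neg at h
      have : c ∈ S.filter fun c => ∀ v, M v ≠ c := mem_filter.mpr ⟨hcS, h⟩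
      rw [hemp] at this
      exact absurd this (notMem_empty c)
    · have hc0S : c0 ∈ S := (mem_filter.mp hc0).1
      have hc0im : ∀ v, M v ≠ c0 := (mem_filter.mp hc0).2
      set ch : ℕ → ℕ := fun i => (fun c => M (φ c))^[i] c0 with hch
      have ch0 : ch 0 = c0 := rfl
      have chs : ∀ i, ch (i + 1) = M (φ (ch i)) := by
        intro i
        simp only [hch, Function.iterate_succ_apply']
      have hinj : ∀ i', (∀ l, l < i' → ch l ∈ S) → ∀ i, i < i' → ch i ≠ ch i' := by
        intro i'
        induction i' using Nat.strong_induction_on with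
        | _ i' ihh =>
          intro hS i hi heq
          rcases i' with _ | j'
          · omega
          · rcases i with _ | j
            · exact hc0im (φ (ch j')) (by rw [← chs j', ← heq, ch0])
            · have h1 : φ (ch j) = φ (ch j') := by
                apply hMinj
                rw [← chs, ← chs, heq]
              have h2 : ch j = ch j' := hφinj (hS j (by omega)) (hS j' (by omega)) h1
              exact ihh j' (by omega) (fun l hl => hS l (by omega)) j (by omega) h2
      have hex : ∃ i, ch i ∉ S := by
        by_contra hall
        push_neg at hall
        have hmap : ∀ i ∈ Finset.range (S.card + 1), ch i ∈ S := fun i _ => hall i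
        have hinj2 : Set.InjOn ch ↑(Finset.range (S.card + 1)) := by
          intro i _ j _ hij
          rcases lt_trichotomy i j with h | h | h
          · exact absurd hij (hinj j (fun l _ => hall l) i h)
          · exact h
          · exact absurd hij.symm (hinj i (fun l _ => hall l) j h)
        have := Finset.card_le_card_of_injOn ch hmap hinj2
        simp at this
      set n := Nat.find hex with hn
      have hnS : ch n ∉ S := Nat.find_spec hex
      have hltS : ∀ i, i < n → ch i ∈ S := by
        intro i hi
        by_contra h
        exact Nat.find_min hex hi h
      have hn1 : 0 < n := by
        rcases Nat.eq_zero_or_pos n with h | h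
        · exact absurd (h ▸ hnS) (by rw [ch0]; exact fun hh => hh hc0S)
        · exact h
      have chinj : ∀ i, i ≤ n → ∀ j, j ≤ n → ch i = ch j → i = j := by
        intro i hi j hj hij
        rcases lt_trichotomy i j with h | h | h
        · exact absurd hij (hinj j (fun l hl => hltS l (by omega)) i h)
        · exact h
        · exact absurd hij.symm (hinj i (fun l hl => hltS l (by omega)) j h)
      set g : ℕ → V := fun j => φ (ch j) with hg
      have hginj : ∀ i, i < n → ∀ j, j < n → g i = g j → i = j := by
        intro i hi j hj hgij
        exact chinj i (by omega) j (by omega) (hφinj (hltS i hi) (hltS j hj) hgij)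
      set M' : V → ℕ := fun v => if h : ∃ j, j < n ∧ g j = v then ch (Nat.find h) else M v with hM'
      have hM'g : ∀ j, j < n → M' (g j) = ch j := by
        intro j hj
        have h : ∃ j', j' < n ∧ g j' = g j := ⟨j, hj, rfl⟩
        have : M' (g j) = ch (Nat.find h) := by simp only [hM', dif_pos h]
        rw [this]
        obtain ⟨h1, h2⟩ := Nat.find_spec h
        rw [hginj _ h1 _ hj h2]
      have hM'o : ∀ v, (∀ j, j < n → g j ≠ v) → M' v = M v := by
        intro v hv
        have : ¬∃ j, j < n ∧ g j = v := by
          rintro ⟨j, hj, hgv⟩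
          exact hv j hj hgv
        simp only [hM', dif_neg this]
      have hM'mem : ∀ v, M' v ∈ L v := by
        intro v
        by_cases h : ∃ j, j < n ∧ g j = v
        · have hv : M' v = ch (Nat.find h) := by simp only [hM', dif_pos h]
          obtain ⟨hf1, hf2⟩ := Nat.find_spec h
          set j0 := Nat.find h with hj0
          rw [hv, ← hf2]
          exact hφmem _ (hltS _ hf1)
        · have hv : M' v = M v := by simp only [hM', dif_neg h]
          rw [hv]; exact hMmem v
      have hM'inj : Function.Injective M' := by
        intro x y hxy
        by_cases hx : ∃ j, j < n ∧ g j = x <;> by_cases hy : ∃ j, j < n ∧ g j = y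
        · obtain ⟨j, hj, rfl⟩ := hx
          obtain ⟨j', hj', rfl⟩ := hy
          rw [hM'g j hj, hM'g j' hj'] at hxy
          rw [chinj j (by omega) j' (by omega) hxy]
        · obtain ⟨j, hj, rfl⟩ := hx
          push_neg at hy
          rw [hM'g j hj, hM'o y hy] at hxy
          exfalso
          match j with
          | 0 => exact hc0im y (by rw [← hxy, ch0])
          | (j0 + 1) =>
            rw [chs j0] at hxy
            have := hMinj hxy
            exact hy j0 (by omega) this
        · obtain ⟨j, hj, rfl⟩ := hy
          push_neg at hx
          rw [hM'g j hj, hM'o x hx] at hxy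
          exfalso
          match j with
          | 0 => exact hc0im x (by rw [hxy, ch0])
          | (j0 + 1) =>
            rw [chs j0] at hxy
            have := hMinj hxy.symm
            exact hx j0 (by omega) this
        · push_neg at hx hy
          rw [hM'o x hx, hM'o y hy] at hxy
          exact hMinj hxy
      have hsub : (S.filter fun c => ∀ v, M' v ≠ c) ⊆ (S.filter fun c => ∀ v, M v ≠ c).erase c0 := by
        intro c hcc
        obtain ⟨hcS, hcim⟩ := mem_filter.mp hcc
        have hcne : c ≠ c0 := by
          intro h
          exact hcim (g 0) (by rw [hM'g 0 hn1, ch0, h])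
        refine mem_erase.mpr ⟨hcne, mem_filter.mpr ⟨hcS, ?_⟩⟩
        intro v hMv
        by_cases hv : ∃ j, j < n ∧ g j = v
        · obtain ⟨j, hj, rfl⟩ := hv
          have hc1 : c = ch (j + 1) := by rw [← hMv, chs]
          by_cases hjn : j + 1 < n
          · exact hcim (g (j + 1)) (by rw [hM'g _ hjn, ← hc1])
          · have hjn' : j + 1 = n := by omega
            rw [hjn'] at hc1
            exact hnS (hc1 ▸ hcS)
        · push_neg at hv
          exact hcim v (by rw [hM'o v hv, hMv])
      have hcard' : (S.filter fun c => ∀ v, M' v ≠ c).card ≤ m := by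
        have h1 := card_le_card hsub
        have h2 := card_erase_of_mem hc0
        have h3 := card_pos.mpr ⟨c0, hc0⟩
        omega
      exact ih M' hM'inj hM'mem hcard'

lemma double_count {V : Type*} [Fintype V] (L : V → Finset ℕ) (T : Finset ℕ) :
    ∑ c ∈ T, (Finset.univ.filter fun v => c ∈ L v).card = ∑ v : V, (L v ∩ T).card := by
  classical
  calc ∑ c ∈ T, (Finset.univ.filter fun v => c ∈ L v).card
      = ∑ c ∈ T, ∑ v : V, if c ∈ L v then 1 else 0 := by
        refine Finset.sum_congr rfl fun c _ => ?_
        rw [Finset.card_filter]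
    _ = ∑ v : V, ∑ c ∈ T, if c ∈ L v then 1 else 0 := Finset.sum_comm
    _ = ∑ v : V, (L v ∩ T).card := by
        refine Finset.sum_congr rfl fun v _ => ?_
        rw [← Finset.card_filter, Finset.filter_mem_eq_inter, Finset.inter_comm]

theorem stmt_8 {V : Type*} [Fintype V] (G : SimpleGraph V) (k : ℕ)
    (hcard : Fintype.card V = k + 1) (hne : G ≠ ⊤) :
    ProportionallyChoosable G k := by
  classical
  intro L hL
  have hk : 1 ≤ k := by
    by_contra hk0
    have hk0' : k = 0 := by omega
    apply hne
    have hsub : Subsingleton V := Fintype.card_le_one_iff_subsingleton.mp (by omega)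
    ext u v
    have huv : u = v := Subsingleton.elim u v
    simp [huv]
  have hpair : ∃ u w : V, u ≠ w ∧ ¬G.Adj u w := by
    by_contra h
    push_neg at h
    apply hne
    ext u v
    simp only [SimpleGraph.top_adj]
    exact ⟨fun ha => ha.ne, fun hne' => h u v hne'⟩
  by_cases hAll : ∀ v v' : V, L v = L v'
  · -- Case A: all lists equal
    obtain ⟨u, w, huw, hnadj⟩ := hpair
    have hLC : ∀ v : V, L v = L u := fun v => hAll v u
    have hcards : Fintype.card {v : V // v ≠ w} = k := by
      have h1 : Fintype.card {v : V // ¬(v = w)} = Fintype.card V - Fintype.card {v : V // v = w} :=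
        Fintype.card_subtype_compl _
      have h2 : Fintype.card {v : V // v = w} = 1 := Fintype.card_subtype_eq w
      simp only [h1, h2, hcard]
      omega
    have e : {v : V // v ≠ w} ≃ {c : ℕ // c ∈ L u} :=
      Fintype.equivOfCardEq (by rw [hcards, Fintype.card_coe, hL u])
    set f : V → ℕ := fun v => if h : v = w then (e ⟨u, huw⟩ : ℕ) else (e ⟨v, h⟩ : ℕ) with hf
    have hfw : f w = (e ⟨u, huw⟩ : ℕ) := by simp only [hf, dif_pos rfl]
    have hfo : ∀ (v : V) (h : v ≠ w), f v = (e ⟨v, h⟩ : ℕ) := by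
      intro v h
      simp only [hf, dif_neg h]
    have hfmem : ∀ v, f v ∈ L v := by
      intro v
      rw [hLC v]
      by_cases h : v = w
      · rw [h, hfw]; exact (e ⟨u, huw⟩).2
      · rw [hfo v h]; exact (e ⟨v, h⟩).2
    have heta : ∀ c, c ∈ L u → eta L c = k + 1 := by
      intro c hc
      have h1 : (Finset.univ.filter fun v => c ∈ L v) = Finset.univ :=
        filter_eq_self.mpr fun v _ => by rw [hLC v]; exact hc
      show (Finset.univ.filter fun v => c ∈ L v).card = k + 1
      rw [h1, card_univ, hcard]
    refine ⟨f, hfmem, ?_, ?_⟩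
    · intro x y hadj heq
      have hxy : x ≠ y := hadj.ne
      by_cases hx : x = w <;> by_cases hy : y = w
      · exact hxy (hx.trans hy.symm)
      · subst hx
        rw [hfw, hfo y hy] at heq
        have h1 : u = y := congrArg Subtype.val (e.injective (Subtype.coe_injective heq))
        subst h1
        exact hnadj hadj.symm
      · subst hy
        rw [hfo x hx, hfw] at heq
        have h1 : x = u := congrArg Subtype.val (e.injective (Subtype.coe_injective heq))
        subst h1
        exact hnadj hadj
      · rw [hfo x hx, hfo y hy] at heq
        exact hxy (congrArg Subtype.val (e.injective (Subtype.coe_injective heq)))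
    · rintro c ⟨v0, hcv0⟩
      have hcC : c ∈ L u := by rw [← hLC v0]; exact hcv0
      have hetac : eta L c = k + 1 := heta c hcC
      by_cases hccu : c = (e ⟨u, huw⟩ : ℕ)
      · have hfil : (Finset.univ.filter fun v => f v = c) = {u, w} := by
          ext x
          simp only [mem_filter, mem_univ, true_and, mem_insert, mem_singleton]
          constructor
          · intro hx
            by_cases hxw : x = w
            · right; exact hxw
            · left
              rw [hfo x hxw, hccu] at hx
              exact (congrArg Subtype.val (e.injective (Subtype.coe_injective hx.symm))).symm
          · rintro (rfl | rfl)
            · rw [hccu]; exact hfo x huw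
            · rw [hccu]; exact hfw
        have hcard2 : ({u, w} : Finset V).card = 2 := by
          rw [card_insert_of_notMem (by simp [huw]), card_singleton]
        right
        rw [hfil, hcard2, hetac]
        symm
        apply Nat.div_eq_of_lt_le <;> omega
      · have hk2 : 2 ≤ k := by
          by_contra h2
          have hk1 : k = 1 := by omega
          have h1 : (L u).card ≤ 1 := by rw [hL u, hk1]
          exact hccu (Finset.card_le_one.mp h1 c hcC _ (e ⟨u, huw⟩).2)
        set x0 := e.symm ⟨c, hcC⟩ with hx0
        have hfx0 : f (x0 : V) = c := by
          rw [hfo (x0 : V) x0.2]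
          have h1 : (⟨(x0 : V), x0.2⟩ : {v : V // v ≠ w}) = x0 := rfl
          rw [h1, hx0, e.apply_symm_apply]
        have hfil : (Finset.univ.filter fun v => f v = c) = {(x0 : V)} := by
          ext x
          simp only [mem_filter, mem_univ, true_and, mem_singleton]
          constructor
          · intro hx
            by_cases hxw : x = w
            · exfalso
              rw [hxw, hfw] at hx
              exact hccu hx.symm
            · rw [hfo x hxw] at hx
              have h2 : e ⟨x, hxw⟩ = ⟨c, hcC⟩ := Subtype.ext hx
              have h1 : (⟨x, hxw⟩ : {v : V // v ≠ w}) = x0 := by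
                rw [hx0, ← h2, e.symm_apply_apply]
              exact congrArg Subtype.val h1
          · rintro rfl
            exact hfx0
        left
        rw [hfil, card_singleton, hetac]
        symm
        apply Nat.div_eq_of_lt_le <;> omega
  · -- Case B
    push_neg at hAll
    obtain ⟨va, vb, hab⟩ := hAll
    haveI hNV : Nonempty V := Fintype.card_pos_iff.mp (by omega)
    set S : Finset ℕ := (Finset.univ.biUnion L).filter (fun c => k ≤ eta L c) with hS
    have hallV : ∀ W : Finset V, W.card ≤ (W.biUnion L).card := by
      intro W
      rcases W.eq_empty_or_nonempty with rfl | ⟨v, hv⟩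
      · simp
      · by_cases hWk : W.card ≤ k
        · calc W.card ≤ k := hWk
            _ = (L v).card := (hL v).symm
            _ ≤ (W.biUnion L).card := card_le_card (subset_biUnion_of_mem L hv)
        · have hWcard : W.card = k + 1 := by
            have h := card_le_univ W
            omega
          by_contra hbi
          push_neg at hbi
          have hbik : (W.biUnion L).card ≤ k := by omega
          have hWuniv : W = Finset.univ := eq_univ_of_card W (by rw [hWcard, hcard])
          have heqL : ∀ x : V, L x = W.biUnion L := by
            intro x
            apply eq_of_subset_of_card_le
            · exact subset_biUnion_of_mem L (by rw [hWuniv]; exact mem_univ x)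
            · rw [hL x]; exact hbik
          exact hab ((heqL va).trans (heqL vb).symm)
    obtain ⟨M, hMinj, hMmem⟩ := (Finset.all_card_le_biUnion_card_iff_exists_injective L).mp hallV
    have hSeta : ∀ c ∈ S, k ≤ eta L c := fun c hc => (mem_filter.mp hc).2
    have hScard : S.card ≤ k + 1 := by
      have h1 : ∑ c ∈ S, k ≤ ∑ c ∈ S, eta L c := Finset.sum_le_sum fun c hc => hSeta c hc
      have h2 : ∑ c ∈ S, eta L c = ∑ v : V, (L v ∩ S).card := by
        simpa only [eta] using double_count L S
      have h3 : ∑ v : V, (L v ∩ S).card ≤ ∑ v : V, k :=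
        Finset.sum_le_sum fun v _ => le_of_le_of_eq (card_le_card inter_subset_left) (hL v)
      have h4 : ∑ _c ∈ S, (k : ℕ) = S.card * k := by rw [Finset.sum_const, smul_eq_mul]
      have h5 : ∑ _v : V, (k : ℕ) = (k + 1) * k := by
        rw [Finset.sum_const, card_univ, hcard, smul_eq_mul]
      have h6 : S.card * k ≤ (k + 1) * k := by omega
      exact Nat.le_of_mul_le_mul_right h6 (by omega)
    set t : {c // c ∈ S} → Finset V := fun c => Finset.univ.filter (fun v => (c : ℕ) ∈ L v) with ht
    have htcard : ∀ c : {c // c ∈ S}, k ≤ (t c).card := by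
      intro c
      have h := hSeta c c.2
      simpa only [ht, eta] using h
    have hallS : ∀ T : Finset {c // c ∈ S}, T.card ≤ (T.biUnion t).card := by
      intro T
      rcases T.eq_empty_or_nonempty with rfl | ⟨c, hcT⟩
      · simp
      · by_cases hTk : T.card ≤ k
        · calc T.card ≤ k := hTk
            _ ≤ (t c).card := htcard c
            _ ≤ (T.biUnion t).card := card_le_card (subset_biUnion_of_mem t hcT)
        · have hTS : T.card ≤ S.card :=
            Finset.card_le_card_of_injOn (fun c => (c : ℕ)) (fun a _ => a.2)
              (fun a _ b _ h => Subtype.ext h)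
          have hTcard : T.card = k + 1 := by omega
          by_contra hbi
          push_neg at hbi
          have hbik : (T.biUnion t).card ≤ k := by omega
          have htc : ∀ c' ∈ T, t c' = T.biUnion t := fun c' hc' =>
            eq_of_subset_of_card_le (subset_biUnion_of_mem t hc')
              (le_trans hbik (htcard c'))
          have hne2 : (T.biUnion t).Nonempty := by
            rw [← htc c hcT]
            exact card_pos.mp (by have := htcard c; omega)
          obtain ⟨v, hv⟩ := hne2
          have hvall : ∀ c' ∈ T, (c' : ℕ) ∈ L v := by
            intro c' hc'
            have : v ∈ t c' := by rw [htc c' hc']; exact hv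
            exact (mem_filter.mp this).2
          have := Finset.card_le_card_of_injOn (fun (c : {c // c ∈ S}) => (c : ℕ))
            (fun a ha => hvall a ha) fun a _ b _ h => Subtype.ext h
          rw [hL v] at this
          omega
    obtain ⟨φ0, hφ0inj, hφ0mem⟩ := (Finset.all_card_le_biUnion_card_iff_exists_injective t).mp hallS
    set φ : ℕ → V := fun c => if h : c ∈ S then φ0 ⟨c, h⟩ else Classical.arbitrary V with hφ
    have hφmem : ∀ c ∈ S, c ∈ L (φ c) := by
      intro c hc
      have h1 : φ c = φ0 ⟨c, hc⟩ := by simp only [hφ, dif_pos hc]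
      rw [h1]
      have := hφ0mem ⟨c, hc⟩
      rw [ht] at this
      exact (mem_filter.mp this).2
    have hφinj : Set.InjOn φ ↑S := by
      intro a ha b hb hab2
      rw [mem_coe] at ha hb
      have h1 : φ a = φ0 ⟨a, ha⟩ := by simp only [hφ, dif_pos ha]
      have h2 : φ b = φ0 ⟨b, hb⟩ := by simp only [hφ, dif_pos hb]
      rw [h1, h2] at hab2
      exact congrArg Subtype.val (hφ0inj hab2)
    obtain ⟨f, hfinj, hfmem, hfcov⟩ := exchange_aux L S φ hφmem hφinj _ M hMinj hMmem le_rfl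
    refine ⟨f, hfmem, fun u v huv h => huv.ne (hfinj h), ?_⟩
    rintro c ⟨v0, hv0⟩
    have heta1 : 1 ≤ eta L c := card_pos.mpr ⟨v0, mem_filter.mpr ⟨mem_univ _, hv0⟩⟩
    have hetak : eta L c ≤ k + 1 := by
      have h := card_filter_le (Finset.univ : Finset V) (fun v => c ∈ L v)
      rw [card_univ, hcard] at h
      exact h
    by_cases him : ∃ v, f v = c
    · obtain ⟨v1, hv1⟩ := him
      have hcount : (Finset.univ.filter fun v => f v = c).card = 1 := by
        rw [card_eq_one]
        refine ⟨v1, ?_⟩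
        ext x
        simp only [mem_filter, mem_univ, true_and, mem_singleton]
        constructor
        · intro hx; exact hfinj (hx.trans hv1.symm)
        · rintro rfl; exact hv1
      rw [hcount]
      by_cases hle : eta L c ≤ k
      · right
        symm
        apply Nat.div_eq_of_lt_le <;> omega
      · have heta : eta L c = k + 1 := by omega
        have hk2 : 2 ≤ k := by
          by_contra h2
          have hk1 : k = 1 := by omega
          have hcall : ∀ v : V, c ∈ L v := by
            intro v
            have hfu : (Finset.univ.filter fun v => c ∈ L v) = Finset.univ := by
              apply eq_of_subset_of_card_le (filter_subset _ _)
              have : eta L c = (Finset.univ.filter fun v => c ∈ L v).card := rfl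
              rw [card_univ, hcard, ← this, heta]
            have hv : v ∈ Finset.univ.filter fun v => c ∈ L v := by
              rw [hfu]; exact mem_univ v
            exact (mem_filter.mp hv).2
          apply hab
          have hsing : ∀ v : V, L v = {c} := by
            intro v
            symm
            apply eq_of_subset_of_card_le (singleton_subset_iff.mpr (hcall v))
            rw [hL v, hk1, card_singleton]
          rw [hsing va, hsing vb]
        left
        symm
        apply Nat.div_eq_of_lt_le <;> omega
    · have h0 : (Finset.univ.filter fun v => f v = c).card = 0 := by
        rw [card_eq_zero, filter_eq_empty_iff]
        intro x _
        exact fun h => him ⟨x, h⟩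
      rw [h0]
      have hcS : c ∉ S := by
        intro h
        obtain ⟨v, hv⟩ := hfcov c h
        exact him ⟨v, hv⟩
      have hklt : eta L c < k := by
        by_contra hge
        push_neg at hge
        exact hcS (mem_filter.mpr ⟨mem_biUnion.mpr ⟨v0, mem_univ _, hv0⟩, hge⟩)
      left
      rw [Nat.div_eq_of_lt hklt]
end

section
/- For every positive integer k, the star K_{1,2k−1} is not proportionally k-choosable. -/
open Finset

/-! Give every vertex the list `{0, …, k-1}`. The colour `c` of the centre then lies in all
`2k` lists, so a proportional colouring must use it `⌊2k/k⌋ = 2` times; but the centre is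
adjacent to every leaf, so it is the only vertex coloured `c`. -/

lemma eta_const {V : Type*} [Fintype V] {S : Finset ℕ} {c : ℕ} (hc : c ∈ S) :
    eta (fun _ : V => S) c = Fintype.card V := by
  simp [eta, hc]

lemma IsProportionalColoring.eta_div_le_card {V : Type*} [Fintype V] {G : SimpleGraph V}
    {k : ℕ} {L : V → Finset ℕ} {f : V → ℕ} (hf : IsProportionalColoring G k L f) {c : ℕ}
    (hc : ∃ v, c ∈ L v) : eta L c / k ≤ #{v | f v = c} := by
  rcases hf.2.2 c hc with h | h
  · exact h.ge
  · rcases k.eq_zero_or_pos with rfl | hk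
    · simp
    · exact h ▸ Nat.div_le_div_right (by omega)

lemma filter_color_eq_singleton_of_adj_all {V : Type*} [Fintype V] [DecidableEq V]
    {G : SimpleGraph V} {f : V → ℕ} (hproper : ∀ u v, G.Adj u v → f u ≠ f v) {v : V}
    (hv : ∀ w, w ≠ v → G.Adj v w) : ({w | f w = f v} : Finset V) = {v} := by
  ext w
  simp only [mem_filter, mem_univ, true_and, mem_singleton]
  exact ⟨fun hw => by_contra fun hne => hproper v w (hv w hne) hw.symm, fun h => h ▸ rfl⟩

lemma completeBipartiteGraph_adj_of_ne_inl {W : Type*} {w : Fin 1 ⊕ W} (hw : w ≠ .inl 0) :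
    (completeBipartiteGraph (Fin 1) W).Adj (.inl 0) w := by
  rcases w with a | b
  · exact absurd (congrArg Sum.inl (Subsingleton.elim a 0)) hw
  · simp

theorem stmt_9_general (k : ℕ) :
    ¬ ProportionallyChoosable (completeBipartiteGraph (Fin 1) (Fin (2 * k - 1))) k := by
  intro h
  obtain ⟨f, hf⟩ := h (fun _ => range k) (fun _ => card_range k)
  set center : Fin 1 ⊕ Fin (2 * k - 1) := .inl 0
  have hc : f center ∈ range k := hf.1 center
  have hk : 0 < k := by simp at hc; omega
  have heta : eta (fun _ : Fin 1 ⊕ Fin (2 * k - 1) => range k) (f center) = 2 * k := by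
    rw [eta_const hc, Fintype.card_sum, Fintype.card_fin, Fintype.card_fin]
    omega
  have hclass : #{v | f v = f center} = 1 := by
    rw [filter_color_eq_singleton_of_adj_all hf.2.1 fun _ => completeBipartiteGraph_adj_of_ne_inl,
      card_singleton]
  have := hf.eta_div_le_card ⟨center, hc⟩
  rw [heta, hclass, Nat.mul_div_cancel _ hk] at this
  omega

theorem stmt_9 (k : ℕ) (hk : 0 < k) :
    ¬ ProportionallyChoosable (completeBipartiteGraph (Fin 1) (Fin (2 * k - 1))) k :=
  stmt_9_general k
end

section
/- If G is a graph with Δ(G) ≥ 2k−1, then G is not proportionally k-choosable; equivalently, χ_pc(G) > (Δ(G)+1)/2 for every graph G. -/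
/-!
Let `v` be a vertex of maximum degree `Δ ≥ 2k - 1`. Give the closed neighbourhood of `v` the
list `{0, …, k-1}` and every other vertex the list `{k, …, 2k-1}`. In any proper coloring from
these lists the color of `v` occurs only at `v`, yet it lies in `Δ + 1 ≥ 2k` lists, so a
proportional coloring would have to use it at least twice.
-/

open Finset

theorem IsProportionalColoring.eta_div_le_card_fiber {V : Type*} [Fintype V]
    {G : SimpleGraph V} {k : ℕ} {L : V → Finset ℕ} {f : V → ℕ}
    (hf : IsProportionalColoring G k L f) {c : ℕ} {v : V} (hc : c ∈ L v) :
    eta L c / k ≤ #{u | f u = c} := by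
  rcases hf.2.2 c ⟨v, hc⟩ with h | h
  · exact h.symm.le
  · rcases Nat.eq_zero_or_pos k with rfl | hk
    · simp
    · exact h ▸ Nat.div_le_div_right (by omega)

namespace SimpleGraph

variable {V : Type*} (G : SimpleGraph V)

open Classical in
noncomputable def starAssignment (v : V) (k : ℕ) (u : V) : Finset ℕ :=
  if G.Adj v u ∨ u = v then range k else Ico k (2 * k)

theorem mem_starAssignment_self {v : V} {k c : ℕ} : c ∈ G.starAssignment v k v ↔ c < k := by
  simp [starAssignment]

theorem card_starAssignment (v : V) (k : ℕ) (u : V) : (G.starAssignment v k u).card = k := by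
  unfold starAssignment
  split_ifs <;> simp only [card_range, Nat.card_Ico]
  omega

theorem degree_add_one_le_eta_starAssignment [Fintype V] [DecidableRel G.Adj] (v : V)
    {k c : ℕ} (hc : c < k) : G.degree v + 1 ≤ eta (G.starAssignment v k) c := by
  classical
  have hsub :
      insert v (G.neighborFinset v) ⊆ ({u | c ∈ G.starAssignment v k u} : Finset V) := by
    intro u hu
    rw [mem_insert, mem_neighborFinset] at hu
    rw [mem_filter, starAssignment, if_pos hu.symm, mem_range]
    exact ⟨mem_univ u, hc⟩
  calc G.degree v + 1 = #(insert v (G.neighborFinset v)) := by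
        rw [card_insert_of_notMem (by simp), card_neighborFinset_eq_degree]
    _ ≤ eta (G.starAssignment v k) c := card_le_card hsub

theorem fiber_eq_singleton_of_starAssignment [Fintype V] (v : V) (k : ℕ) {f : V → ℕ}
    (hL : ∀ u, f u ∈ G.starAssignment v k u) (hproper : ∀ u w, G.Adj u w → f u ≠ f w) :
    ({u | f u = f v} : Finset V) = {v} := by
  have hv : f v < k := G.mem_starAssignment_self.1 (hL v)
  ext u
  simp only [mem_filter, mem_univ, true_and, mem_singleton]
  refine ⟨fun hu => ?_, fun hu => hu ▸ rfl⟩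
  by_contra hne
  by_cases hadj : G.Adj v u
  · exact hproper v u hadj hu.symm
  · have hfu := hL u
    simp only [starAssignment, hadj, hne, or_self, if_false, mem_Ico] at hfu
    omega

end SimpleGraph

theorem stmt_10 {V : Type*} [Fintype V] (G : SimpleGraph V) [DecidableRel G.Adj]
    (k : ℕ) (hk : 0 < k) (hΔ : 2 * k - 1 ≤ G.maxDegree) :
    ¬ ProportionallyChoosable G k := by
  intro hP
  have : Nonempty V := by
    by_contra h
    rw [not_nonempty_iff] at h
    rw [G.maxDegree_of_subsingleton] at hΔ
    omega
  obtain ⟨v, hv⟩ := G.exists_maximal_degree_vertex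
  obtain ⟨f, hf⟩ := hP _ (G.card_starAssignment v k)
  have hfv : f v < k := G.mem_starAssignment_self.1 (hf.1 v)
  have h2k : 2 * k ≤ eta (G.starAssignment v k) (f v) := by
    have := G.degree_add_one_le_eta_starAssignment v hfv
    omega
  have : 2 ≤ 1 :=
    calc 2 ≤ eta (G.starAssignment v k) (f v) / k := (Nat.le_div_iff_mul_le hk).2 (by omega)
      _ ≤ #{u | f u = f v} := hf.eta_div_le_card_fiber (hf.1 v)
      _ = 1 := by rw [G.fiber_eq_singleton_of_starAssignment v k hf.1 hf.2.1, card_singleton]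
  omega
end

section
/- For m ≥ 2, the complete multipartite graph K_{2*m} (m parts each of size 2) is not proportionally m-choosable. -/
open Finset

/-- The complete multipartite graph `K_{2*m}`: `m` parts, each of size 2;
vertices are adjacent iff they lie in different parts. -/
def Ktwom (m : ℕ) : SimpleGraph (Fin m × Fin 2) where
  Adj u v := u.1 ≠ v.1
  symm := ⟨fun u v h => Ne.symm h⟩
  loopless := ⟨fun u h => h rfl⟩
/-! Give every vertex of part `j` the shared palette `{1, …, m - 1}` together with a private
color `m + j`. A private color lies in only two lists, so proportionality (`⌈2 / m⌉ = 1`) lets it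
be used at most once; hence every part meets the shared palette. But in a proper coloring of a
complete multipartite graph distinct parts receive disjoint sets of colors, so the `m` parts would
need `m` distinct colors from a palette of size `m - 1`. -/

namespace IsProportionalColoring

variable {V : Type*} [Fintype V] {G : SimpleGraph V} {k : ℕ} {L : V → Finset ℕ} {f : V → ℕ}

theorem card_fiber_le_one (hf : IsProportionalColoring G k L f) {c : ℕ}
    (hc : ∃ v, c ∈ L v) (hη : eta L c ≤ k) : #{v | f v = c} ≤ 1 := by
  rcases Nat.eq_zero_or_pos k with rfl | hk
  · rcases hf.2.2 c hc with h | h <;> simp [h]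
  rcases hf.2.2 c hc with h | h <;> rw [h]
  · exact Nat.div_le_of_le_mul (by omega)
  · exact Nat.lt_succ_iff.mp ((Nat.div_lt_iff_lt_mul hk).mpr (by omega))

end IsProportionalColoring

namespace Ktwom

theorem part_eq_of_apply_eq {m : ℕ} {f : Fin m × Fin 2 → ℕ}
    (hf : ∀ u v, (Ktwom m).Adj u v → f u ≠ f v) {u v : Fin m × Fin 2} (huv : f u = f v) :
    u.1 = v.1 := by
  by_contra h
  exact hf u v h huv

theorem le_card_of_forall_exists_mem {m : ℕ} {f : Fin m × Fin 2 → ℕ}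
    (hf : ∀ u v, (Ktwom m).Adj u v → f u ≠ f v) {S : Finset ℕ}
    (hS : ∀ j, ∃ i, f (j, i) ∈ S) : m ≤ #S := by
  choose i hi using hS
  simpa using Finset.card_le_card_of_injOn (s := univ) (fun j => f (j, i j))
    (fun j _ => hi j) fun j _ j' _ h => part_eq_of_apply_eq hf h

def sharedPaletteLists (m : ℕ) (v : Fin m × Fin 2) : Finset ℕ :=
  insert (m + v.1) (Icc 1 (m - 1))

theorem mem_sharedPaletteLists {m c : ℕ} {v : Fin m × Fin 2} :
    c ∈ sharedPaletteLists m v ↔ c = m + v.1 ∨ c ∈ Icc 1 (m - 1) :=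
  mem_insert

theorem card_sharedPaletteLists {m : ℕ} (hm : 1 ≤ m) (v : Fin m × Fin 2) :
    #(sharedPaletteLists m v) = m := by
  rw [sharedPaletteLists, card_insert_of_notMem (by simp; omega), Nat.card_Icc]
  omega

theorem eta_sharedPaletteLists_private_le (m : ℕ) (j : Fin m) :
    eta (sharedPaletteLists m) (m + j) ≤ 2 := by
  refine (card_le_card fun v hv => ?_).trans (card_le_two (a := (j, 0)) (b := (j, 1)))
  obtain ⟨⟨j', i⟩, hv⟩ := v, (mem_filter.mp hv).2
  simp only [mem_sharedPaletteLists, mem_Icc] at hv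
  obtain rfl : j' = j := Fin.ext (by omega)
  fin_cases i <;> simp

theorem exists_mem_Icc_of_isProportionalColoring {m : ℕ} (hm : 2 ≤ m)
    {f : Fin m × Fin 2 → ℕ} (hf : IsProportionalColoring (Ktwom m) m (sharedPaletteLists m) f)
    (j : Fin m) : ∃ i, f (j, i) ∈ Icc 1 (m - 1) := by
  by_contra! h
  have hprivate : ∀ i, f (j, i) = m + j := fun i =>
    (mem_sharedPaletteLists.mp (hf.1 (j, i))).resolve_right (h i)
  have hpair : {(j, 0), (j, 1)} ⊆ ({v | f v = m + j} : Finset _) := by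
    intro v hv
    simp only [mem_insert, mem_singleton] at hv
    rcases hv with rfl | rfl <;> simp [hprivate]
  have hle_one : #{v | f v = m + j} ≤ 1 :=
    hf.card_fiber_le_one ⟨(j, 0), mem_insert_self _ _⟩
      ((eta_sharedPaletteLists_private_le m j).trans hm)
  have htwo_le := card_le_card hpair
  rw [card_pair (by simp)] at htwo_le
  omega

end Ktwom

theorem stmt_11 (m : ℕ) (hm : 2 ≤ m) : ¬ ProportionallyChoosable (Ktwom m) m := by
  intro H
  obtain ⟨f, hf⟩ := H (Ktwom.sharedPaletteLists m) (Ktwom.card_sharedPaletteLists (by omega))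
  have hpalette := Ktwom.le_card_of_forall_exists_mem hf.2.1
    (Ktwom.exists_mem_Icc_of_isProportionalColoring hm hf)
  rw [Nat.card_Icc] at hpalette
  omega
end

section
/- For every k ≥ 1, the disjoint union of k vertex-disjoint copies of the star K_{1,k} is not proportionally k-choosable. -/
open Finset

/-- The disjoint union of `k` copies of the star `K_{1,k}`: vertex `(i, none)` is
the center of the `i`-th star and `(i, some j)` its leaves. -/
def kStars (k : ℕ) : SimpleGraph (Fin k × Option (Fin k)) where
  Adj u v := u.1 = v.1 ∧ ((u.2 = none ∧ v.2 ≠ none) ∨ (u.2 ≠ none ∧ v.2 = none))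
  symm := ⟨by intro u v h; tauto⟩
  loopless := ⟨by intro u h; tauto⟩

/-! Centers get the list `{0, …, k - 1}`; the leaves of star `i` get `0` together with `k - 1`
colors private to star `i`. Every color other than `0` then has multiplicity at most `k`, so it
is used at most once. By pigeonhole some center is colored `0`, and then so is one of its leaves,
since `0` is the only color of a leaf's list not private to its star. -/

section ProportionalColoring

variable {V : Type*} [Fintype V] {G : SimpleGraph V} {k : ℕ} {L : V → Finset ℕ} {f : V → ℕ}

lemma eta_le_card_of_forall_mem_range {ι : Type*} [Fintype ι] (g : ι → V) {c : ℕ}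
    (hg : ∀ v, c ∈ L v → v ∈ Set.range g) : eta L c ≤ Fintype.card ι := by
  classical
  calc eta L c ≤ (univ.image g).card :=
        card_le_card fun v hv => by simpa using hg v (mem_filter.mp hv).2
    _ ≤ Fintype.card ι := card_image_le

lemma IsProportionalColoring.card_filter_eq_le_one (hf : IsProportionalColoring G k L f) {c : ℕ}
    (hc : eta L c ≤ k) : (univ.filter fun v => f v = c).card ≤ 1 := by
  by_cases hcL : ∃ v, c ∈ L v
  · have hk : 0 < k :=
      hc.trans_lt' <| card_pos.mpr <| hcL.elim fun v hv => ⟨v, by simpa using hv⟩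
    rcases hf.2.2 c hcL with h | h <;> rw [h] <;>
      exact Nat.le_of_lt_succ (Nat.div_lt_of_lt_mul (by omega))
  · push Not at hcL
    simp only [card_le_one, mem_filter, mem_univ, true_and]
    rintro v rfl
    exact absurd (hf.1 v) (hcL v)

lemma IsProportionalColoring.exists_eq_of_card_lt (hf : IsProportionalColoring G k L f)
    {ι : Type*} [Fintype ι] (g : ι ↪ V) (a : ℕ) {C : Finset ℕ}
    (hL : ∀ x, L (g x) ⊆ insert a C) (hC : ∀ c ∈ C, eta L c ≤ k)
    (hcard : C.card < Fintype.card ι) : ∃ x, f (g x) = a := by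
  by_contra! hne
  have hmaps : ∀ x, f (g x) ∈ C := fun x =>
    (mem_insert.mp (hL x (hf.1 (g x)))).resolve_left (hne x)
  have hinj : Set.InjOn (fun x => f (g x)) (univ : Finset ι) := fun x _ y _ hxy =>
    g.injective <| card_le_one.mp (hf.card_filter_eq_le_one (hC _ (hmaps x))) _
      (by simp) _ (by simp [← hxy])
  exact hcard.not_ge (card_le_card_of_injOn _ (fun x _ => hmaps x) hinj)

end ProportionalColoring

namespace kStars

def leafColors (k i : ℕ) : Finset ℕ := Ioo ((i + 1) * k) ((i + 1) * k + k)

def assignment (k : ℕ) : Fin k × Option (Fin k) → Finset ℕ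
  | (_, none) => range k
  | (i, some _) => insert 0 (leafColors k i)

lemma eq_of_mem_leafColors {k i j c : ℕ} (hi : c ∈ leafColors k i) (hj : c ∈ leafColors k j) :
    i = j := by
  simp only [leafColors, mem_Ioo] at hi hj
  have h₁ : (i + 1) * k < (j + 2) * k := by linarith
  have h₂ : (j + 1) * k < (i + 2) * k := by linarith
  have := Nat.lt_of_mul_lt_mul_right h₁
  have := Nat.lt_of_mul_lt_mul_right h₂
  omega

lemma lt_of_mem_leafColors {k i c : ℕ} (hc : c ∈ leafColors k i) : k < c := by
  simp only [leafColors, mem_Ioo] at hc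
  nlinarith

lemma card_assignment {k : ℕ} (v : Fin k × Option (Fin k)) : (assignment k v).card = k := by
  obtain ⟨i, _ | _⟩ := v
  · exact card_range k
  · have := i.pos
    rw [assignment, card_insert_of_notMem fun h => by simpa using lt_of_mem_leafColors h,
      leafColors, Nat.card_Ioo]
    omega

lemma eta_assignment_le_of_lt {k c : ℕ} (hc : 0 < c) (hck : c < k) :
    eta (assignment k) c ≤ k := by
  simpa using eta_le_card_of_forall_mem_range (fun i : Fin k => (i, none)) <| by
    rintro ⟨i, _ | _⟩ h
    · exact ⟨i, rfl⟩
    · rcases mem_insert.mp h with rfl | h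
      · omega
      · exact absurd (lt_of_mem_leafColors h) (by omega)

lemma eta_assignment_le_of_mem_leafColors {k c : ℕ} (i : Fin k) (hc : c ∈ leafColors k i) :
    eta (assignment k) c ≤ k := by
  simpa using eta_le_card_of_forall_mem_range (fun j : Fin k => (i, some j)) <| by
    rintro ⟨a, _ | j⟩ h
    · exact absurd (mem_range.mp h) (lt_of_mem_leafColors hc).not_gt
    · rcases mem_insert.mp h with rfl | h
      · exact absurd (lt_of_mem_leafColors hc) (by omega)
      · exact ⟨j, by rw [Fin.ext (eq_of_mem_leafColors hc h)]⟩

variable {k : ℕ} {f : Fin k × Option (Fin k) → ℕ}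

lemma exists_center_eq_zero (hk : 1 ≤ k)
    (hf : IsProportionalColoring (kStars k) k (assignment k) f) : ∃ i, f (i, none) = 0 := by
  refine hf.exists_eq_of_card_lt ⟨fun i => (i, none), fun _ _ h => (Prod.ext_iff.mp h).1⟩ 0
    (C := Ioo 0 k) (fun _ c hc => ?_) (fun c hc => ?_)
    (by rw [Nat.card_Ioo, Fintype.card_fin]; omega)
  · have := mem_range.mp hc
    rcases c.eq_zero_or_pos with rfl | h
    · exact mem_insert_self _ _
    · exact mem_insert_of_mem (mem_Ioo.mpr ⟨h, this⟩)
  · exact eta_assignment_le_of_lt (mem_Ioo.mp hc).1 (mem_Ioo.mp hc).2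

lemma exists_leaf_eq_zero (i : Fin k)
    (hf : IsProportionalColoring (kStars k) k (assignment k) f) : ∃ j, f (i, some j) = 0 := by
  refine hf.exists_eq_of_card_lt ⟨fun j => (i, some j), fun _ _ h => by simpa using h⟩ 0
    (fun _ => subset_rfl) (fun c hc => eta_assignment_le_of_mem_leafColors i hc) ?_
  have := i.pos
  rw [leafColors, Nat.card_Ioo, Fintype.card_fin]
  omega

end kStars

theorem stmt_12 (k : ℕ) (hk : 1 ≤ k) : ¬ ProportionallyChoosable (kStars k) k := by
  intro h
  obtain ⟨f, hf⟩ := h (kStars.assignment k) kStars.card_assignment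
  obtain ⟨i, hi⟩ := kStars.exists_center_eq_zero hk hf
  obtain ⟨j, hj⟩ := kStars.exists_leaf_eq_zero i hf
  exact hf.2.1 (i, none) (i, some j) ⟨rfl, .inl ⟨rfl, by simp⟩⟩ (hi.trans hj.symm)
end

section
/- For every positive integer m, the complete bipartite graph K_{m,m} is not proportionally m-choosable. -/
open Finset

lemma card_filter_sumtype {α β : Type*} [Fintype α] [Fintype β]
    (p : α ⊕ β → Prop) [DecidablePred p] :
    (Finset.univ.filter p).card =
      (Finset.univ.filter fun a => p (Sum.inl a)).card +
      (Finset.univ.filter fun b => p (Sum.inr b)).card := by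
  rw [← Fintype.card_subtype, ← Fintype.card_subtype, ← Fintype.card_subtype,
      Fintype.card_congr (Equiv.subtypeSum (p := p)), Fintype.card_sum]

theorem stmt_13 (m : ℕ) (hm : 0 < m) :
    ¬ ProportionallyChoosable (completeBipartiteGraph (Fin m) (Fin m)) m := by
  intro H
  -- the bad list assignment
  set R : Finset ℕ := if m % 2 = 0 then insert m (Finset.range (m - 1)) else Finset.range m
    with hR
  set L : Fin m ⊕ Fin m → Finset ℕ := fun v => match v with
    | Sum.inl _ => Finset.range m
    | Sum.inr _ => R with hL
  have hmR : m - 1 ∉ Finset.range (m - 1) := by simp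
  have hcardR : R.card = m := by
    rw [hR]; split_ifs with h
    · rw [Finset.card_insert_of_notMem (by simp), Finset.card_range]; omega
    · simp
  obtain ⟨f, h1, h2, h3⟩ := H L (fun v => by cases v <;> simp [hL, hcardR])
  -- per-side counts
  set A : ℕ → ℕ := fun c => (Finset.univ.filter fun v : Fin m => f (Sum.inl v) = c).card with hA
  set B : ℕ → ℕ := fun c => (Finset.univ.filter fun v : Fin m => f (Sum.inr v) = c).card with hB
  have hsplit : ∀ c, (Finset.univ.filter fun v => f v = c).card = A c + B c := fun c =>
    card_filter_sumtype (fun v => f v = c)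
  -- properness: each color lives on one side
  have hside : ∀ c, A c = 0 ∨ B c = 0 := by
    intro c
    by_contra h
    push_neg at h
    obtain ⟨u, hu⟩ := Finset.card_pos.mp (Nat.pos_of_ne_zero h.1)
    obtain ⟨w, hw⟩ := Finset.card_pos.mp (Nat.pos_of_ne_zero h.2)
    simp only [Finset.mem_filter] at hu hw
    exact h2 (Sum.inl u) (Sum.inr w) (by simp) (hu.2.trans hw.2.symm)
  -- colors common to both sides are used exactly twice
  have hcommon : ∀ c, c ∈ Finset.range m → c ∈ R → A c + B c = 2 := by
    intro c hc1 hc2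
    have heta : eta L c = 2 * m := by
      unfold eta
      rw [Finset.filter_true_of_mem, Finset.card_univ]
      · simp [Fintype.card_sum]; ring
      · intro v _
        cases v with
        | inl a => exact hc1
        | inr a => exact hc2
    rcases h3 c ⟨Sum.inl ⟨0, hm⟩, hc1⟩ with h | h <;>
      rw [hsplit] at h <;> rw [h, heta]
    · exact Nat.div_eq_of_lt_le (by omega) (by omega)
    · exact Nat.div_eq_of_lt_le (by omega) (by omega)
  -- hence A c is even for such colors
  have hAeven : ∀ c, c ∈ Finset.range m → c ∈ R → 2 ∣ A c := by
    intro c hc1 hc2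
    have := hcommon c hc1 hc2
    rcases hside c with h | h <;> omega
  -- total count on the left side
  have hcount : m = ∑ c ∈ Finset.range m, A c := by
    have := Finset.card_eq_sum_card_fiberwise
      (f := fun v : Fin m => f (Sum.inl v)) (s := Finset.univ) (t := Finset.range m)
      (fun v _ => by simpa [hL] using h1 (Sum.inl v))
    simpa [hA] using this
  rcases Nat.even_or_odd m with he | ho
  · -- m even : color m-1 is used once, on the left
    have hme : m % 2 = 0 := Nat.even_iff.mp he
    have hRe : R = insert m (Finset.range (m - 1)) := by rw [hR, if_pos hme]
    have hnotR : m - 1 ∉ R := by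
      rw [hRe]; simp only [Finset.mem_insert]; push_neg
      exact ⟨by omega, hmR⟩
    -- η(m-1) = m
    have heta : eta L (m - 1) = m := by
      unfold eta
      have e1 : ∀ v : Fin m, v ∈ Finset.univ → m - 1 ∈ L (Sum.inl v) := fun v _ =>
        Finset.mem_range.mpr (by omega)
      have e2 : ∀ v : Fin m, v ∈ Finset.univ → ¬ (m - 1 ∈ L (Sum.inr v)) := fun v _ => hnotR
      rw [card_filter_sumtype, Finset.filter_true_of_mem e1, Finset.filter_false_of_mem e2,
        Finset.card_univ, Finset.card_empty]
      simp
    have hB0 : B (m - 1) = 0 := by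
      rw [hB]
      rw [Finset.card_eq_zero, Finset.filter_eq_empty_iff]
      intro w _ hw
      exact hnotR (hw ▸ h1 (Sum.inr w))
    have hone : A (m - 1) + B (m - 1) = 1 := by
      rcases h3 (m - 1) ⟨Sum.inl ⟨0, hm⟩, Finset.mem_range.mpr (by omega)⟩ with h | h <;>
        rw [hsplit] at h <;> rw [h, heta]
      · exact Nat.div_self hm
      · exact Nat.div_eq_of_lt_le (by omega) (by omega)
    -- split the sum
    have hms : m = (m - 1) + 1 := by omega
    rw [hms, Finset.sum_range_succ, ← hms] at hcount
    have hdvd : 2 ∣ ∑ c ∈ Finset.range (m - 1), A c := by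
      refine Finset.dvd_sum fun c hc => ?_
      have hc' := Finset.mem_range.mp hc
      exact hAeven c (by simp; omega) (by rw [hRe]; simp [hc'])
    omega
  · -- m odd : all lists equal range m, every color used twice
    have hmo : m % 2 = 1 := Nat.odd_iff.mp ho
    have hRo : R = Finset.range m := by rw [hR]; simp [hmo]
    have hdvd : 2 ∣ ∑ c ∈ Finset.range m, A c := by
      refine Finset.dvd_sum fun c hc => hAeven c hc (by rw [hRo]; exact hc)
    omega
end

section
/- Let G be a graph and L a k-assignment for G such that every color in the palette has multiplicity less than 2k. If there exists a proper L-coloring of G in which every color c is used at most ⌈η(c)/k⌉ times, then G has a proportional L-coloring. -/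
open Finset

/-!
A colouring within the ceiling bounds can fail to be proportional only at a colour `c` with
`η(c) ≥ k` that it does not use, since `η(c) < 2k` gives `⌊η(c)/k⌋ ≤ 1`. Such a colour `c₀` is
repaired along a path `c₀ → c₁ → ⋯ → cₘ`, where `cᵢ → cᵢ₊₁` means that some vertex coloured
`cᵢ₊₁` has `cᵢ` in its list and `cₘ` can spare a vertex: one vertex of colour `cᵢ₊₁` moves to
`cᵢ`, which is unused at that moment, so the colouring stays proper. The path exists by a
Hall-type count: if no colour reachable from `c₀` could spare a vertex, the reachable colours `R`
would all have multiplicity `≥ k`, so at least `|R|` vertices have lists meeting `R`; but these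
vertices are coloured injectively by `R \ {c₀}`.
-/

theorem Relation.ReflTransGen.exists_seq {α : Type*} {r : α → α → Prop} {a b : α}
    (h : Relation.ReflTransGen r a b) :
    ∃ m, ∃ g : ℕ → α, g 0 = a ∧ g m = b ∧ ∀ i < m, r (g i) (g (i + 1)) := by
  induction h with
  | refl => exact ⟨0, fun _ => a, rfl, rfl, by omega⟩
  | @tail b c _ hbc ih =>
    obtain ⟨m, g, hg0, hgm, hg⟩ := ih
    refine ⟨m + 1, Function.update g (m + 1) c, by simpa using hg0, by simp, fun i hi => ?_⟩
    rcases Nat.lt_succ_iff_lt_or_eq.1 hi with hi | rfl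
    · simpa [Function.update_of_ne (by omega : i ≠ m + 1),
        Function.update_of_ne (by omega : i + 1 ≠ m + 1)] using hg i hi
    · simpa [hgm] using hbc

namespace ProportionalColoring

open Function

variable {V : Type*}

def RecolorStep (L : V → Finset ℕ) (f : V → ℕ) (c c' : ℕ) : Prop :=
  ∃ v, c ∈ L v ∧ f v = c'

theorem RecolorStep.update [DecidableEq V] {L : V → Finset ℕ} {f : V → ℕ} {v : V} {c₀ c c' : ℕ}
    (h : RecolorStep L f c c') (hc' : c' ≠ f v) : RecolorStep L (update f v c₀) c c' := by
  obtain ⟨w, hw, hfw⟩ := h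
  exact ⟨w, hw, by rwa [update_of_ne (by rintro rfl; exact hc' hfw.symm)]⟩

variable [Fintype V]

def usage (f : V → ℕ) (c : ℕ) : ℕ := (univ.filter fun v => f v = c).card

structure IsCeilBoundedColoring (G : SimpleGraph V) (k : ℕ) (L : V → Finset ℕ) (f : V → ℕ) :
    Prop where
  mem_list : ∀ v, f v ∈ L v
  proper : ∀ u v, G.Adj u v → f u ≠ f v
  usage_le : ∀ c, (∃ v, c ∈ L v) → usage f c ≤ (eta L c + k - 1) / k

def palette (L : V → Finset ℕ) : Finset ℕ := univ.biUnion L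

def deficientColors (k : ℕ) (L : V → Finset ℕ) (f : V → ℕ) : Finset ℕ :=
  (palette L).filter fun c => k ≤ eta L c ∧ usage f c = 0

def CanSpare (k : ℕ) (L : V → Finset ℕ) (f : V → ℕ) (c : ℕ) : Prop :=
  0 < usage f c ∧ (k ≤ eta L c → 2 ≤ usage f c)

section Usage

variable {f : V → ℕ} {c c₀ : ℕ}

theorem usage_pos_of_apply_eq {v : V} (hv : f v = c) : 0 < usage f c :=
  card_pos.2 ⟨v, by simpa using hv⟩

theorem apply_ne_of_usage_eq_zero (h : usage f c = 0) (v : V) : f v ≠ c :=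
  fun hv => (usage_pos_of_apply_eq hv).ne' h

theorem eq_of_usage_eq_one (h : usage f c = 1) {u w : V} (hu : f u = c) (hw : f w = c) :
    u = w :=
  card_le_one.1 h.le u (by simpa using hu) w (by simpa using hw)

theorem usage_eq_one_of_not_canSpare {k : ℕ} {L : V → Finset ℕ} {v : V} (hv : f v = c)
    (h : ¬CanSpare k L f c) : k ≤ eta L c ∧ usage f c = 1 := by
  have := usage_pos_of_apply_eq hv
  unfold CanSpare at h
  omega

variable [DecidableEq V] {v : V}

theorem usage_update_self (h : f v ≠ c₀) :
    usage (update f v c₀) c₀ = usage f c₀ + 1 := by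
  have : (univ.filter fun w => update f v c₀ w = c₀) =
      insert v (univ.filter fun w => f w = c₀) := by
    ext w
    rcases eq_or_ne w v with rfl | hw <;> simp [*]
  rw [usage, this, card_insert_of_notMem (by simpa using h), usage]

theorem usage_update_apply (h : f v ≠ c₀) :
    usage (update f v c₀) (f v) = usage f (f v) - 1 := by
  have : (univ.filter fun w => update f v c₀ w = f v) =
      (univ.filter fun w => f w = f v).erase v := by
    ext w
    rcases eq_or_ne w v with rfl | hw <;> simp [*, Ne.symm h]
  rw [usage, this, card_erase_of_mem (by simp), usage]

theorem usage_update_of_ne (hc : c ≠ c₀) (hv : f v ≠ c) : usage (update f v c₀) c = usage f c := by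
  unfold usage
  congr 1
  ext w
  rcases eq_or_ne w v with rfl | hw <;> simp [*, Ne.symm hc]

end Usage

theorem card_le_card_filter_exists_mem {k : ℕ} {L : V → Finset ℕ} (hk : 0 < k)
    (hL : ∀ v, (L v).card ≤ k) {S : Finset ℕ} (hS : ∀ c ∈ S, k ≤ eta L c) :
    S.card ≤ (univ.filter fun v => ∃ c ∈ S, c ∈ L v).card := by
  refine Nat.le_of_mul_le_mul_right (card_mul_le_card_mul (fun c v => c ∈ L v) ?_ ?_) hk
  · intro c hc
    refine (hS c hc).trans_eq (congrArg card ?_)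
    ext v
    simpa [bipartiteAbove] using fun hv => ⟨c, hc, hv⟩
  · exact fun v _ => (card_le_card fun c hc => (mem_filter.1 hc).2).trans (hL v)

variable {G : SimpleGraph V} {k : ℕ} {L : V → Finset ℕ} {f : V → ℕ} {c₀ : ℕ}

theorem mem_palette {c : ℕ} : c ∈ palette L ↔ ∃ v, c ∈ L v := by
  simp [palette]

theorem mem_deficientColors {c : ℕ} :
    c ∈ deficientColors k L f ↔ (∃ v, c ∈ L v) ∧ k ≤ eta L c ∧ usage f c = 0 := by
  simp [deficientColors, mem_palette]

section Update

variable [DecidableEq V] {v : V}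

theorem IsCeilBoundedColoring.update (hf : IsCeilBoundedColoring G k L f) (hk : 0 < k)
    (hc₀ : c₀ ∈ deficientColors k L f) (hv : c₀ ∈ L v) :
    IsCeilBoundedColoring G k L (update f v c₀) := by
  obtain ⟨-, hc₀k, hc₀0⟩ := mem_deficientColors.1 hc₀
  have hunused := apply_ne_of_usage_eq_zero hc₀0
  refine ⟨fun w => ?_, fun u w huw => ?_, fun c hc => ?_⟩
  · rcases eq_or_ne w v with rfl | hw <;> simp [*, hf.mem_list]
  · rcases eq_or_ne u v with rfl | hu
    · simpa [(G.ne_of_adj huw).symm] using (hunused w).symm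
    rcases eq_or_ne w v with rfl | hw
    · simpa [hu] using hunused u
    · simpa [hu, hw] using hf.proper u w huw
  · rcases eq_or_ne c c₀ with rfl | hcc₀
    · rw [usage_update_self (hunused v), hc₀0]
      exact (Nat.le_div_iff_mul_le hk).2 (by omega)
    rcases eq_or_ne c (f v) with rfl | hcv
    · rw [usage_update_apply (hunused v)]
      exact (Nat.sub_le _ _).trans (hf.usage_le _ hc)
    · rw [usage_update_of_ne hcc₀ (Ne.symm hcv)]
      exact hf.usage_le c hc

theorem deficientColors_update_subset (h : f v ≠ c₀) :
    deficientColors k L (update f v c₀) ⊆ insert (f v) ((deficientColors k L f).erase c₀) := by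
  intro c hc
  rcases eq_or_ne c (f v) with rfl | hcv
  · exact mem_insert_self _ _
  rcases eq_or_ne c c₀ with rfl | hcc₀
  · simp [mem_deficientColors, usage_update_self h] at hc
  rw [mem_deficientColors, usage_update_of_ne hcc₀ (Ne.symm hcv)] at hc
  exact mem_insert_of_mem (mem_erase.2 ⟨hcc₀, mem_deficientColors.2 hc⟩)

theorem apply_notMem_deficientColors_update (h : f v ≠ c₀) (hs : CanSpare k L f (f v)) :
    f v ∉ deficientColors k L (update f v c₀) := by
  rw [mem_deficientColors, usage_update_apply h]
  unfold CanSpare at hs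
  omega

theorem apply_mem_deficientColors_update (h : f v ≠ c₀) (hv : f v ∈ L v)
    (hs : ¬CanSpare k L f (f v)) : f v ∈ deficientColors k L (update f v c₀) := by
  obtain ⟨hk, h1⟩ := usage_eq_one_of_not_canSpare rfl hs
  exact mem_deficientColors.2 ⟨⟨v, hv⟩, hk, by rw [usage_update_apply h, h1]⟩

theorem CanSpare.update {c : ℕ} (h : CanSpare k L f c) (hc : c ≠ c₀) (hv : f v ≠ c) :
    CanSpare k L (update f v c₀) c := by
  rwa [CanSpare, usage_update_of_ne hc hv]

end Update

theorem exists_reachable_canSpare (hk : 0 < k) (hL : ∀ v, (L v).card ≤ k)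
    (hf : ∀ v, f v ∈ L v) (hc₀ : c₀ ∈ deficientColors k L f) :
    ∃ c, Relation.ReflTransGen (RecolorStep L f) c₀ c ∧ CanSpare k L f c := by
  classical
  by_contra! hnone
  obtain ⟨hc₀L, hc₀k, hc₀0⟩ := mem_deficientColors.1 hc₀
  set R := (palette L).filter (Relation.ReflTransGen (RecolorStep L f) c₀)
  set N := univ.filter fun v => ∃ c ∈ R, c ∈ L v
  have hc₀R : c₀ ∈ R := mem_filter.2 ⟨mem_palette.2 hc₀L, .refl⟩
  have hN : ∀ v ∈ N, f v ∈ R.erase c₀ ∧ k ≤ eta L (f v) ∧ usage f (f v) = 1 := by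
    intro v hv
    obtain ⟨c, hcR, hcv⟩ := (mem_filter.1 hv).2
    have hreach := (mem_filter.1 hcR).2.tail ⟨v, hcv, rfl⟩
    obtain ⟨hk', h1⟩ := usage_eq_one_of_not_canSpare rfl (hnone _ hreach)
    exact ⟨mem_erase.2 ⟨apply_ne_of_usage_eq_zero hc₀0 v,
      mem_filter.2 ⟨mem_palette.2 ⟨v, hf v⟩, hreach⟩⟩, hk', h1⟩
  have hRk : ∀ c ∈ R, k ≤ eta L c := by
    intro c hc
    rcases (mem_filter.1 hc).2.cases_tail with rfl | ⟨b, hb, v, hbv, rfl⟩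
    · exact hc₀k
    · exact (hN v (mem_filter.2 ⟨mem_univ v, b,
        mem_filter.2 ⟨mem_palette.2 ⟨v, hbv⟩, hb⟩, hbv⟩)).2.1
  have hNR : N.card < R.card :=
    (card_le_card_of_injOn f (fun v hv => (hN v hv).1)
      fun u hu w _ huw => eq_of_usage_eq_one (hN u hu).2.2 rfl huw.symm).trans_lt
      (card_erase_lt_of_mem hc₀R)
  exact (card_le_card_filter_exists_mem hk hL hRk).not_gt hNR

theorem exists_deficientColors_subset_erase_of_path (hk : 0 < k) (m : ℕ) :
    ∀ f, IsCeilBoundedColoring G k L f → ∀ g : ℕ → ℕ, g 0 ∈ deficientColors k L f →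
      (∀ i < m, RecolorStep L f (g i) (g (i + 1))) → CanSpare k L f (g m) →
      ∃ f', IsCeilBoundedColoring G k L f' ∧
        deficientColors k L f' ⊆ (deficientColors k L f).erase (g 0) := by
  classical
  induction m using Nat.strong_induction_on with
  | _ m ih =>
  intro f hf g hg₀ hstep hspare
  have hg₀0 := (mem_deficientColors.1 hg₀).2.2
  have hunused := apply_ne_of_usage_eq_zero hg₀0
  have hm : 0 < m := Nat.pos_of_ne_zero fun h => by subst h; exact hspare.1.ne' hg₀0
  obtain ⟨v, hv, hfv⟩ := hstep 0 hm
  have hf₁ := hf.update hk hg₀ hv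
  by_cases hs : CanSpare k L f (f v)
  · refine ⟨_, hf₁, fun c hc => ?_⟩
    rcases mem_insert.1 (deficientColors_update_subset (hunused v) hc) with rfl | hc
    · exact absurd hc (apply_notMem_deficientColors_update (hunused v) hs)
    · exact hc
  -- `f v` was used only at `v`, so it is now deficient; restarting from the last visit of the
  -- path to `f v` guarantees that no later step is witnessed by `v`.
  set i := Nat.findGreatest (fun j => g j = f v) m
  have hgi : g i = f v := Nat.findGreatest_spec (P := fun j => g j = f v) hm hfv.symm
  have hi₁ : 1 ≤ i := Nat.le_findGreatest (P := fun j => g j = f v) hm hfv.symm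
  have hi : i < m :=
    (Nat.findGreatest_le m).lt_of_ne fun h => hs (by rwa [← hgi, show i = m from h])
  have hlater : ∀ j, i < j → j ≤ m → g j ≠ f v := fun j => Nat.findGreatest_is_greatest
  obtain ⟨f', hf', hsub⟩ := ih (m - i) (by omega) _ hf₁ (fun t => g (i + t))
    (by simpa [hgi] using apply_mem_deficientColors_update (hunused v) (hf.mem_list v) hs)
    (fun t ht => (hstep (i + t) (by omega)).update (hlater _ (by omega) (by omega)))
    (by
      rw [show i + (m - i) = m by omega]
      exact hspare.update (fun h => hspare.1.ne' (h ▸ hg₀0))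
        (hlater m hi le_rfl).symm)
  refine ⟨f', hf', hsub.trans fun c hc => ?_⟩
  obtain ⟨hci, hc⟩ := mem_erase.1 hc
  rcases mem_insert.1 (deficientColors_update_subset (hunused v) hc) with rfl | hc
  · exact absurd (by simpa using hgi.symm) hci
  · exact hc

theorem exists_deficientColors_subset_erase (hL : ∀ v, (L v).card = k)
    (hf : IsCeilBoundedColoring G k L f) (hc₀ : c₀ ∈ deficientColors k L f) :
    ∃ f', IsCeilBoundedColoring G k L f' ∧
      deficientColors k L f' ⊆ (deficientColors k L f).erase c₀ := by
  obtain ⟨⟨v, hv⟩, -, -⟩ := mem_deficientColors.1 hc₀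
  have hk : 0 < k := hL v ▸ card_pos.2 ⟨c₀, hv⟩
  obtain ⟨c, hreach, hspare⟩ :=
    exists_reachable_canSpare hk (fun v => (hL v).le) hf.mem_list hc₀
  obtain ⟨m, g, rfl, rfl, hstep⟩ := hreach.exists_seq
  exact exists_deficientColors_subset_erase_of_path hk m f hf g hc₀ hstep hspare

theorem exists_deficientColors_eq_empty (hL : ∀ v, (L v).card = k) (f : V → ℕ)
    (hf : IsCeilBoundedColoring G k L f) :
    ∃ f', IsCeilBoundedColoring G k L f' ∧ deficientColors k L f' = ∅ := by
  obtain he | ⟨c₀, hc₀⟩ := (deficientColors k L f).eq_empty_or_nonempty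
  · exact ⟨f, hf, he⟩
  obtain ⟨f₁, hf₁, hsub⟩ := exists_deficientColors_subset_erase hL hf hc₀
  have : (deficientColors k L f₁).card < (deficientColors k L f).card :=
    card_lt_card (hsub.trans_ssubset (erase_ssubset hc₀))
  exact exists_deficientColors_eq_empty hL f₁ hf₁
termination_by (deficientColors k L f).card

theorem isProportionalColoring_of_deficientColors_eq_empty
    (hmult : ∀ c, (∃ v, c ∈ L v) → eta L c < 2 * k) (hf : IsCeilBoundedColoring G k L f)
    (hd : deficientColors k L f = ∅) : IsProportionalColoring G k L f := by
  refine ⟨hf.mem_list, hf.proper, fun c hc => ?_⟩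
  have hη := hmult c hc
  have hk : 0 < k := by omega
  have hceil : (eta L c + k - 1) / k ≤ eta L c / k + 1 := by
    rw [← Nat.add_div_right _ hk]
    exact Nat.div_le_div_right (by omega)
  have hfloor : eta L c / k ≤ usage f c := by
    by_cases hkη : k ≤ eta L c
    · have hused : usage f c ≠ 0 := fun h0 =>
        (eq_empty_iff_forall_notMem.1 hd) c (mem_deficientColors.2 ⟨hc, hkη, h0⟩)
      have : eta L c / k < 2 := (Nat.div_lt_iff_lt_mul hk).2 hη
      omega
    · rw [Nat.div_eq_of_lt (by omega)]
      exact Nat.zero_le _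
  have := hf.usage_le c hc
  change usage f c = _ ∨ usage f c = _
  omega

end ProportionalColoring

theorem stmt_14 {V : Type*} [Fintype V] (G : SimpleGraph V) (k : ℕ)
    (L : V → Finset ℕ) (hL : ∀ v, (L v).card = k)
    (hmult : ∀ c : ℕ, (∃ v, c ∈ L v) → eta L c < 2 * k)
    (hex : ∃ f : V → ℕ, (∀ v, f v ∈ L v) ∧ (∀ u v, G.Adj u v → f u ≠ f v) ∧
      ∀ c : ℕ, (∃ v, c ∈ L v) →
        (Finset.univ.filter fun v => f v = c).card ≤ (eta L c + k - 1) / k) :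
    ∃ f : V → ℕ, IsProportionalColoring G k L f := by
  obtain ⟨f, hf⟩ := hex
  obtain ⟨f', hf', hd⟩ :=
    ProportionalColoring.exists_deficientColors_eq_empty (G := G) hL f ⟨hf.1, hf.2.1, hf.2.2⟩
  exact ⟨f', ProportionalColoring.isProportionalColoring_of_deficientColors_eq_empty hmult hf' hd⟩
end

section
/- Every graph G with Δ(G) ≥ 1 is proportionally k-choosable for k = Δ(G) + ⌈|V(G)|/2⌉; that is, χ_pc(G) ≤ Δ(G) + ⌈|V(G)|/2⌉. -/
open Finset

/-!
Write `n = |V|`, `Δ = Δ(G)` and `η = η(c)`. Since `k ≥ Δ + ⌈n/2⌉` and `Δ ≥ 1`, every color lies on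
fewer than `2k` lists, so a proportional coloring is a proper `L`-coloring using each color at
most twice, at most once if `η ≤ k`, and at least once if `η ≥ k`.

An `L`-assignment (not necessarily proper) with these counts exists by Hall's theorem applied to
color slots, with the Mendelsohn–Dulmage dummy-vertex trick forcing the colors with `η ≥ k` to be
used. Take one with the fewest monochromatic edges. If `uv` is monochromatic in color `c`, then
`c` is used only on `u` and `v` and `η(c) > k`. At least `k - Δ ≥ ⌈n/2⌉` colors `c'` of `L(u)` are
missing from `u`'s other neighbours. Each of them is used (otherwise recolor `u` with `c'`), by a
vertex `w` that is adjacent to `v` or has `c ∉ L(w)` (otherwise swap the colors of `u` and `w`).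
These vertices are distinct, so `⌈n/2⌉ ≤ (Δ - 1) + (n - η(c)) < ⌈n/2⌉`.
-/

open Function

theorem Finset.exists_injective_covering_of_hall {ι β : Type*} [Fintype ι] [DecidableEq β]
    (t : ι → Finset β) (M : Finset β)
    (hι : ∀ A : Finset ι, #A ≤ #(A.biUnion t))
    (hM : ∀ Y ⊆ M, #Y ≤ #{i | ¬Disjoint (t i) Y}) :
    ∃ f : ι → β, Injective f ∧ (∀ i, f i ∈ t i) ∧ ∀ b ∈ M, ∃ i, f i = b := by
  classical
  set S := M ∪ univ.biUnion t
  have hιS : Fintype.card ι ≤ #S := (hι univ).trans (card_le_card subset_union_right)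
  set d := #S - Fintype.card ι
  -- Mendelsohn–Dulmage: `d` dummies avoiding `M` fill up `S`, so a matching of all of `ι ⊕ Fin d`
  -- covers `M` by `ι`.
  set t' : ι ⊕ Fin d → Finset β := Sum.elim t fun _ => S \ M
  have hall : ∀ A : Finset (ι ⊕ Fin d), #A ≤ #(A.biUnion t') := by
    intro A
    have hsplit := card_toLeft_add_card_toRight (u := A)
    have hleft : A.toLeft.biUnion t ⊆ A.biUnion t' := fun b hb => by
      obtain ⟨i, hi, hb⟩ := mem_biUnion.mp hb
      exact mem_biUnion.mpr ⟨.inl i, mem_toLeft.mp hi, hb⟩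
    obtain hR | ⟨j, hj⟩ := A.toRight.eq_empty_or_nonempty
    · rw [hR, card_empty] at hsplit
      exact hsplit ▸ (hι _).trans (card_le_card hleft)
    set Y := M \ A.toLeft.biUnion t
    have hY : #Y ≤ Fintype.card ι - #A.toLeft := by
      refine (hM Y sdiff_subset).trans ?_
      rw [← card_compl]
      refine card_le_card fun i hi => mem_compl.mpr fun hiA => (mem_filter.mp hi).2 ?_
      exact disjoint_left.mpr fun b hb hbY =>
        (mem_sdiff.mp hbY).2 (mem_biUnion.mpr ⟨i, hiA, hb⟩)
    have hcover : S \ Y ⊆ A.biUnion t' := fun b hb => by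
      obtain ⟨hbS, hbY⟩ := mem_sdiff.mp hb
      by_cases hbM : b ∈ M
      · exact hleft (by simpa [Y, hbM] using hbY)
      · exact mem_biUnion.mpr ⟨.inr j, mem_toRight.mp hj, mem_sdiff.mpr ⟨hbS, hbM⟩⟩
    have hYS : #(S \ Y) = #S - #Y :=
      card_sdiff_of_subset (sdiff_subset.trans subset_union_left)
    have hcard := card_le_card hcover
    have hL := card_le_univ A.toLeft
    have hR : #A.toRight ≤ d := (card_le_univ _).trans_eq (Fintype.card_fin d)
    omega
  obtain ⟨f, hf, hft⟩ := (all_card_le_biUnion_card_iff_exists_injective t').mp hall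
  have hfS : univ.image f = S := by
    refine eq_of_subset_of_card_le (fun b hb => ?_) ?_
    · obtain ⟨x, -, rfl⟩ := mem_image.mp hb
      rcases x with i | j
      · exact mem_union_right _ (mem_biUnion.mpr ⟨i, mem_univ _, hft (.inl i)⟩)
      · exact (mem_sdiff.mp (hft (.inr j))).1
    · rw [card_image_of_injective _ hf, card_univ, Fintype.card_sum, Fintype.card_fin]
      omega
  refine ⟨f ∘ Sum.inl, hf.comp Sum.inl_injective, fun i => hft (.inl i), fun b hb => ?_⟩
  obtain ⟨x, -, hx⟩ := mem_image.mp (hfS.symm ▸ mem_union_left _ hb : b ∈ univ.image f)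
  rcases x with i | j
  · exact ⟨i, hx⟩
  · exact absurd hb (hx ▸ (mem_sdiff.mp (hft (.inr j))).2)

section

variable {V : Type*} [Fintype V]

def colorCount (g : V → ℕ) (c : ℕ) : ℕ := #{v | g v = c}

def colorCapacity (k : ℕ) (L : V → Finset ℕ) (c : ℕ) : ℕ := if k < eta L c then 2 else 1

lemma one_le_colorCapacity (k : ℕ) (L : V → Finset ℕ) (c : ℕ) : 1 ≤ colorCapacity k L c := by
  unfold colorCapacity; split_ifs <;> simp

lemma colorCapacity_le_two (k : ℕ) (L : V → Finset ℕ) (c : ℕ) : colorCapacity k L c ≤ 2 := by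
  unfold colorCapacity; split_ifs <;> simp

lemma eta_le_mul_colorCapacity {k : ℕ} {L : V → Finset ℕ} {c : ℕ} (h : eta L c ≤ 2 * k) :
    eta L c ≤ k * colorCapacity k L c := by
  unfold colorCapacity; split_ifs <;> omega

/-- Color `c` has the slot `(c, false)`, and also `(c, true)` if it lies on more than `k` lists. -/
def slots (k : ℕ) (L : V → Finset ℕ) (D : Finset ℕ) : Finset (ℕ × Bool) :=
  {p ∈ D ×ˢ univ | p.2 = true → k < eta L p.1}

lemma mem_slots {k : ℕ} {L : V → Finset ℕ} {D : Finset ℕ} {p : ℕ × Bool} :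
    p ∈ slots k L D ↔ p.1 ∈ D ∧ (p.2 = true → k < eta L p.1) := by
  simp [slots]

lemma card_slots (k : ℕ) (L : V → Finset ℕ) (D : Finset ℕ) :
    #(slots k L D) = ∑ c ∈ D, colorCapacity k L c := by
  rw [slots, card_filter, sum_product]
  refine sum_congr rfl fun c _ => ?_
  by_cases h : k < eta L c <;> simp [colorCapacity, h]

lemma slots_biUnion (k : ℕ) (L : V → Finset ℕ) (W : Finset V) :
    slots k L (W.biUnion L) = W.biUnion fun v => slots k L (L v) := by
  ext p
  simp only [mem_slots, mem_biUnion]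
  exact ⟨fun ⟨⟨v, hv, hc⟩, h⟩ => ⟨v, hv, hc, h⟩, fun ⟨v, hv, hc, h⟩ => ⟨⟨v, hv, hc⟩, h⟩⟩

lemma card_le_card_slots_biUnion {k : ℕ} (hk : 0 < k) {L : V → Finset ℕ} (hL : ∀ v, #(L v) = k)
    (hη : ∀ c, eta L c ≤ 2 * k) (W : Finset V) :
    #W ≤ #(slots k L (W.biUnion L)) := by
  set D := W.biUnion L
  have hcount : k * #W ≤ k * #(slots k L D) := calc
    k * #W = ∑ v ∈ W, #(D.bipartiteAbove (fun v c => c ∈ L v) v) := by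
      rw [mul_comm, ← smul_eq_mul, ← sum_const]
      refine sum_congr rfl fun v hv => ?_
      rw [← hL v, bipartiteAbove, filter_mem_eq_inter,
        inter_eq_right.mpr (subset_biUnion_of_mem L hv)]
    _ = ∑ c ∈ D, #(W.bipartiteBelow (fun v c => c ∈ L v) c) :=
      sum_card_bipartiteAbove_eq_sum_card_bipartiteBelow _
    _ ≤ ∑ c ∈ D, k * colorCapacity k L c := by
      refine sum_le_sum fun c _ => le_trans ?_ (eta_le_mul_colorCapacity (hη c))
      exact card_le_card (filter_subset_filter _ (subset_univ W))
    _ = k * #(slots k L D) := by rw [card_slots, mul_sum]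
  exact Nat.le_of_mul_le_mul_left hcount hk

lemma card_le_card_of_carriers_subset {k : ℕ} (hk : 0 < k) {L : V → Finset ℕ}
    (hL : ∀ v, #(L v) = k) (X : Finset ℕ) (U : Finset V) (hX : ∀ c ∈ X, k ≤ eta L c)
    (hU : ∀ c ∈ X, ∀ v, c ∈ L v → v ∈ U) : #X ≤ #U := by
  have := card_nsmul_le_card_nsmul (R := ℕ) (s := X) (t := U) (fun c v => c ∈ L v)
    (m := k) (n := k) (fun c hc => ?_) (fun v _ => ?_)
  · exact Nat.le_of_mul_le_mul_right (by simpa using this) hk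
  · refine (hX c hc).trans (card_le_card fun v hv => ?_)
    have hv := (mem_filter.mp hv).2
    exact mem_filter.mpr ⟨hU c hc v hv, hv⟩
  · exact (card_le_card fun c hc => (mem_filter.mp hc).2).trans (hL v).le

structure IsQuotaColoring (k : ℕ) (L : V → Finset ℕ) (g : V → ℕ) : Prop where
  mem_list : ∀ v, g v ∈ L v
  one_le_colorCount : ∀ c, k ≤ eta L c → 1 ≤ colorCount g c
  colorCount_le : ∀ c, colorCount g c ≤ colorCapacity k L c

theorem exists_isQuotaColoring {k : ℕ} (hk : 0 < k) {L : V → Finset ℕ}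
    (hL : ∀ v, #(L v) = k) (hη : ∀ c, eta L c ≤ 2 * k) : ∃ g, IsQuotaColoring k L g := by
  classical
  set mandatory := {c ∈ univ.biUnion L | k ≤ eta L c}.image fun c => (c, false)
  have hmandatory : ∀ p ∈ mandatory, p.2 = false ∧ k ≤ eta L p.1 := by
    simp only [mandatory, mem_image, mem_filter]
    rintro p ⟨c, ⟨-, hc⟩, rfl⟩
    exact ⟨rfl, hc⟩
  have hall : ∀ Y ⊆ mandatory, #Y ≤ #{v | ¬Disjoint (slots k L (L v)) Y} := by
    intro Y hY
    calc #Y ≤ #(Y.image Prod.fst) := by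
          refine card_le_card_of_injOn Prod.fst (fun p hp => mem_image_of_mem _ hp) ?_
          intro p hp q hq hpq
          exact Prod.ext hpq ((hmandatory p (hY hp)).1.trans (hmandatory q (hY hq)).1.symm)
      _ ≤ _ := by
          refine card_le_card_of_carriers_subset hk hL _ _ ?_ ?_
          · intro c hc
            obtain ⟨p, hp, rfl⟩ := mem_image.mp hc
            exact (hmandatory p (hY hp)).2
          · intro c hc v hcv
            obtain ⟨p, hp, rfl⟩ := mem_image.mp hc
            have hslot : p ∈ slots k L (L v) :=
              mem_slots.mpr ⟨hcv, by simp [(hmandatory p (hY hp)).1]⟩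
            exact mem_filter.mpr ⟨mem_univ v, not_disjoint_iff.mpr ⟨p, hslot, hp⟩⟩
  obtain ⟨f, hf, hft, hcover⟩ := exists_injective_covering_of_hall
    (fun v => slots k L (L v)) mandatory
    (fun W => slots_biUnion k L W ▸ card_le_card_slots_biUnion hk hL hη W) hall
  refine ⟨fun v => (f v).1, fun v => (mem_slots.mp (hft v)).1, fun c hc => ?_, fun c => ?_⟩
  · have hc' : (c, false) ∈ mandatory := by
      obtain ⟨v, hv⟩ := card_pos.mp (hk.trans_le hc)
      have hcL : c ∈ univ.biUnion L := mem_biUnion.mpr ⟨v, mem_univ v, (mem_filter.mp hv).2⟩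
      exact mem_image_of_mem _ (mem_filter.mpr ⟨hcL, hc⟩)
    obtain ⟨v, hv⟩ := hcover (c, false) hc'
    exact card_pos.mpr ⟨v, mem_filter.mpr ⟨mem_univ v, by simp [hv]⟩⟩
  · calc colorCount (fun v => (f v).1) c ≤ #(slots k L {c}) := by
          refine card_le_card_of_injOn f (fun v hv => ?_) hf.injOn
          have hfv := mem_slots.mp (hft v)
          exact mem_slots.mpr ⟨mem_singleton.mpr (mem_filter.mp hv).2, hfv.2⟩
      _ = colorCapacity k L c := by rw [card_slots, sum_singleton]

lemma colorCount_comp_equiv (g : V → ℕ) (σ : V ≃ V) (c : ℕ) :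
    colorCount (g ∘ σ) c = colorCount g c :=
  card_equiv σ (by simp)

namespace IsQuotaColoring

variable [DecidableEq V] {k : ℕ} {L : V → Finset ℕ} {g : V → ℕ}

lemma update (hg : IsQuotaColoring k L g) {u v : V} {c' : ℕ} (hc' : c' ∈ L u)
    (hunused : ∀ x, g x ≠ c') (hvu : v ≠ u) (hv : g v = g u) :
    IsQuotaColoring k L (update g u c') where
  mem_list x := by
    rcases eq_or_ne x u with rfl | hx
    · simpa using hc'
    · simpa [hx] using hg.mem_list x
  one_le_colorCount e he := by
    rcases eq_or_ne e (g u) with rfl | he'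
    · exact card_pos.mpr ⟨v, by simp [hvu, hv]⟩
    · refine (hg.one_le_colorCount e he).trans (card_le_card fun x hx => ?_)
      have hx := (mem_filter.mp hx).2
      have hxu : x ≠ u := by rintro rfl; exact he' hx.symm
      simp [hxu, hx]
  colorCount_le e := by
    rcases eq_or_ne e c' with rfl | he
    · calc colorCount (Function.update g u e) e ≤ #{u} := card_le_card fun x hx => by
            have hx := (mem_filter.mp hx).2
            by_contra hxu
            exact hunused x (by simpa [mem_singleton.not.mp hxu] using hx)
        _ ≤ colorCapacity k L e := (card_singleton u).trans_le (one_le_colorCapacity k L e)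
    · refine le_trans (card_le_card fun x hx => ?_) (hg.colorCount_le e)
      have hx := (mem_filter.mp hx).2
      have hxu : x ≠ u := by rintro rfl; exact he (by simpa using hx.symm)
      simpa [hxu] using hx

lemma comp_swap (hg : IsQuotaColoring k L g) {u w : V} (hu : g w ∈ L u) (hw : g u ∈ L w) :
    IsQuotaColoring k L (g ∘ Equiv.swap u w) where
  mem_list x := by
    rcases eq_or_ne x u with rfl | hxu
    · simpa using hu
    rcases eq_or_ne x w with rfl | hxw
    · simpa using hw
    simpa [Equiv.swap_apply_of_ne_of_ne hxu hxw] using hg.mem_list x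
  one_le_colorCount c hc := colorCount_comp_equiv g _ c ▸ hg.one_le_colorCount c hc
  colorCount_le c := colorCount_comp_equiv g _ c ▸ hg.colorCount_le c

end IsQuotaColoring

lemma IsQuotaColoring.isProportionalColoring {G : SimpleGraph V} {k : ℕ} {L : V → Finset ℕ}
    {g : V → ℕ} (hg : IsQuotaColoring k L g) (hη : ∀ c, eta L c < 2 * k)
    (hproper : ∀ u v, G.Adj u v → g u ≠ g v) : IsProportionalColoring G k L g := by
  refine ⟨hg.mem_list, hproper, fun c ⟨v, hv⟩ => ?_⟩
  have hpos : 0 < eta L c := card_pos.mpr ⟨v, mem_filter.mpr ⟨mem_univ v, hv⟩⟩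
  have hlow := hg.one_le_colorCount c
  have hhigh := hg.colorCount_le c
  change colorCount g c = _ ∨ colorCount g c = _
  unfold colorCapacity at hhigh
  have hlt := hη c
  have hk : 0 < k := by omega
  rcases lt_trichotomy (eta L c) k with h | h | h
  · rw [Nat.div_eq_of_lt h, Nat.div_eq_of_lt_le (k := 1) (by omega) (by omega)]
    rw [if_neg (by omega)] at hhigh
    omega
  · rw [h, Nat.div_self hk]
    rw [if_neg (by omega)] at hhigh
    have := hlow h.ge
    omega
  · rw [Nat.div_eq_of_lt_le (k := 1) (by omega) (by omega),
      Nat.div_eq_of_lt_le (k := 2) (by omega) (by omega)]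
    rw [if_pos h] at hhigh
    have := hlow h.le
    omega

variable (G : SimpleGraph V) [DecidableRel G.Adj]

def monoEdges (g : V → ℕ) : Finset (V × V) := {p | G.Adj p.1 p.2 ∧ g p.1 = g p.2}

variable {G}

lemma card_monoEdges_lt {g g' : V → ℕ} (hfree : ∀ x y, G.Adj x y → g' x ≠ g x → g' x ≠ g' y)
    {u v : V} (huv : G.Adj u v) (hmono : g u = g v) (hu : g' u ≠ g u) :
    #(monoEdges G g') < #(monoEdges G g) := by
  refine card_lt_card ((ssubset_iff_of_subset fun p hp => ?_).mpr ⟨(u, v), ?_, ?_⟩)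
  · obtain ⟨hadj, hp⟩ := (mem_filter.mp hp).2
    have h1 : g' p.1 = g p.1 := by_contra fun h => hfree _ _ hadj h hp
    have h2 : g' p.2 = g p.2 := by_contra fun h => hfree _ _ hadj.symm h hp.symm
    exact mem_filter.mpr ⟨mem_univ p, hadj, h1 ▸ h2 ▸ hp⟩
  · exact mem_filter.mpr ⟨mem_univ _, huv, hmono⟩
  · exact fun h => hfree u v huv hu (mem_filter.mp h).2.2

lemma exists_forall_adj_ne_of_card_monoEdges_lt {P : (V → ℕ) → Prop}
    (hstep : ∀ g, P g → ∀ u v, G.Adj u v → g u = g v →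
      ∃ g', P g' ∧ #(monoEdges G g') < #(monoEdges G g))
    {g : V → ℕ} (hg : P g) : ∃ g, P g ∧ ∀ u v, G.Adj u v → g u ≠ g v := by
  induction hn : #(monoEdges G g) using Nat.strong_induction_on generalizing g with
  | _ n ih =>
    by_cases hproper : ∀ u v, G.Adj u v → g u ≠ g v
    · exact ⟨g, hg, hproper⟩
    push Not at hproper
    obtain ⟨u, v, huv, hmono⟩ := hproper
    obtain ⟨g', hg', hlt⟩ := hstep g hg u v huv hmono
    exact ih _ (hn ▸ hlt) hg' rfl

section Recoloring

variable [DecidableEq V]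

lemma card_monoEdges_update_lt {g : V → ℕ} {u v : V} (huv : G.Adj u v) (hmono : g u = g v)
    {c' : ℕ} (hc' : c' ≠ g u) (hunused : ∀ x, g x ≠ c') :
    #(monoEdges G (update g u c')) < #(monoEdges G g) := by
  refine card_monoEdges_lt (fun x y hxy hx => ?_) huv hmono (by simpa using hc')
  obtain rfl : x = u := by by_contra h; simp [h] at hx
  simpa [hxy.ne'] using (hunused y).symm

lemma card_monoEdges_comp_swap_lt {g : V → ℕ} {u v w : V} (huv : G.Adj u v) (hmono : g u = g v)
    (hcarriers : ∀ x, g x = g u → x = u ∨ x = v) (hfree : ∀ y, G.Adj u y → y ≠ v → g y ≠ g w)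
    (hwu : g w ≠ g u) (hvw : ¬G.Adj v w) :
    #(monoEdges G (g ∘ Equiv.swap u w)) < #(monoEdges G g) := by
  have huw : u ≠ w := by rintro rfl; exact hwu rfl
  refine card_monoEdges_lt (fun x y hxy hx h => ?_) huv hmono (by simpa using hwu)
  have hyx : y ≠ x := hxy.ne'
  rcases eq_or_ne x u with rfl | hxu
  · rcases eq_or_ne y w with rfl | hyw
    · exact hwu (by simpa using h)
    have h : g y = g w := by simpa [Equiv.swap_apply_of_ne_of_ne hyx hyw] using h.symm
    rcases eq_or_ne y v with rfl | hyv
    · exact hwu (h.symm.trans hmono.symm)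
    · exact hfree y hxy hyv h
  rcases eq_or_ne x w with rfl | hxw
  · rcases eq_or_ne y u with rfl | hyu
    · exact hwu (by simpa using h.symm)
    have h : g y = g u := by simpa [Equiv.swap_apply_of_ne_of_ne hyu hyx] using h.symm
    obtain rfl := (hcarriers y h).resolve_left hyu
    exact hvw hxy.symm
  · exact hx (by simp [Equiv.swap_apply_of_ne_of_ne hxu hxw])

theorem IsQuotaColoring.exists_card_monoEdges_lt {k : ℕ} {L : V → Finset ℕ}
    (hL : ∀ v, #(L v) = k) (hk : G.maxDegree + (Fintype.card V + 1) / 2 ≤ k) {g : V → ℕ}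
    (hg : IsQuotaColoring k L g) {u v : V} (huv : G.Adj u v) (hmono : g u = g v) :
    ∃ g', IsQuotaColoring k L g' ∧ #(monoEdges G g') < #(monoEdges G g) := by
  by_contra! hmin
  set c := g u
  have hpair : ({u, v} : Finset V) ⊆ ({x | g x = c} : Finset V) := by
    intro x hx
    rcases mem_insert.mp hx with rfl | hx
    · simp [c]
    · simp [mem_singleton.mp hx, c, hmono]
  have hcap : colorCount g c ≤ 2 := (hg.colorCount_le c).trans (colorCapacity_le_two k L c)
  have hheavy : k < eta L c := by
    by_contra h
    have := (card_pair huv.ne ▸ card_le_card hpair).trans (hg.colorCount_le c)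
    simp [colorCapacity, h] at this
  have hcarriers : ∀ x, g x = c → x = u ∨ x = v := by
    have hfiber := eq_of_subset_of_card_le hpair ((card_pair huv.ne).symm ▸ hcap)
    intro x hx
    have : x ∈ ({u, v} : Finset V) := by rw [hfiber]; simpa using hx
    simpa using this
  set free := L u \ insert c (((G.neighborFinset u).erase v).image g)
  have hfree_card : k - G.maxDegree ≤ #free := by
    have : #(insert c (((G.neighborFinset u).erase v).image g)) ≤ G.maxDegree := calc
      _ ≤ #(((G.neighborFinset u).erase v).image g) + 1 := card_insert_le _ _
      _ ≤ #((G.neighborFinset u).erase v) + 1 := by grw [card_image_le]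
      _ = G.degree u := by
        rw [card_erase_of_mem ((G.mem_neighborFinset u v).mpr huv),
          G.card_neighborFinset_eq_degree]
        have := G.degree_pos_iff_exists_adj u |>.mpr ⟨v, huv⟩
        omega
      _ ≤ G.maxDegree := G.degree_le_maxDegree u
    have : #(L u) - #(insert c (((G.neighborFinset u).erase v).image g)) ≤ #free :=
      le_card_sdiff _ _
    rw [hL u] at this
    omega
  have hfree_sub :
      free ⊆ (((G.neighborFinset v).erase u) ∪ ({w | c ∉ L w} : Finset V)).image g := by
    intro c' hc'
    simp only [free, mem_sdiff, mem_insert, mem_image, mem_erase, SimpleGraph.mem_neighborFinset,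
      not_or, not_exists, not_and] at hc'
    obtain ⟨hc'u, hc'c, hc'N⟩ := hc'
    obtain ⟨w, hw⟩ : ∃ w, g w = c' := by
      by_contra! hunused
      exact (hmin _ (hg.update hc'u hunused huv.ne' hmono.symm)).not_gt
        (card_monoEdges_update_lt huv hmono hc'c hunused)
    refine mem_image.mpr ⟨w, ?_, hw⟩
    by_contra hw'
    have hwu : w ≠ u := by rintro rfl; exact hc'c hw.symm
    simp only [mem_union, mem_erase, SimpleGraph.mem_neighborFinset, mem_filter, mem_univ,
      true_and, not_or, not_and, not_not] at hw'
    exact (hmin _ (hg.comp_swap (hw ▸ hc'u) hw'.2)).not_gt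
      (card_monoEdges_comp_swap_lt huv hmono hcarriers (fun y hy hyv => hw ▸ hc'N y ⟨hyv, hy⟩)
        (hw ▸ hc'c) (hw'.1 hwu))
  have hN : #((G.neighborFinset v).erase u) ≤ G.maxDegree - 1 := by
    rw [card_erase_of_mem ((G.mem_neighborFinset v u).mpr huv.symm),
      G.card_neighborFinset_eq_degree]
    exact Nat.sub_le_sub_right (G.degree_le_maxDegree v) 1
  have hL' : eta L c + #({w | c ∉ L w} : Finset V) = Fintype.card V :=
    card_filter_add_card_filter_not _
  have := (hfree_card.trans (card_le_card hfree_sub)).trans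
    (card_image_le.trans (card_union_le _ _))
  omega

end Recoloring

theorem proportionallyChoosable_of_maxDegree_add_le {k : ℕ}
    (hk : G.maxDegree + (Fintype.card V + 1) / 2 ≤ k) (hn : Fintype.card V < 2 * k) :
    ProportionallyChoosable G k := by
  classical
  intro L hL
  have hη : ∀ c, eta L c < 2 * k := fun c => (card_le_univ _).trans_lt hn
  obtain ⟨g₀, hg₀⟩ := exists_isQuotaColoring (by omega) hL fun c => (hη c).le
  obtain ⟨g, hg, hproper⟩ := exists_forall_adj_ne_of_card_monoEdges_lt
    (fun g hg u v huv hmono => hg.exists_card_monoEdges_lt hL hk huv hmono) hg₀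
  exact ⟨g, hg.isProportionalColoring hη hproper⟩

end

theorem stmt_16 {V : Type*} [Fintype V] (G : SimpleGraph V) [DecidableRel G.Adj]
    (hΔ : 1 ≤ G.maxDegree) :
    ProportionallyChoosable G (G.maxDegree + (Fintype.card V + 1) / 2) :=
  proportionallyChoosable_of_maxDegree_add_le le_rfl (by omega)
end

section
/- If G is a disjoint union of complete graphs whose largest component has t vertices, then the proportional choice number of G equals t. -/
open Finset

/-- The proportional choice number: the least `k` such that `G` is
proportionally `k`-choosable. -/
noncomputable def propChoiceNumber {V : Type*} [Fintype V] (G : SimpleGraph V) : ℕ :=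
  sInf {k | ProportionallyChoosable G k}

/-!
Upper bound, for any partition `part : V → ι` into parts of at most `t` vertices and lists of size
`t`: a choice from the lists using each colour at most once per part amounts to a perfect matching
in which each slot `(i, c)` (part `i`, colour `c`) is taken either by a vertex of part `i` coloured
`c` or by a blocker of colour `c`. Colour `c` has `|ι| - ⌊η(c)/t⌋` blockers, so it is used exactly
`⌊η(c)/t⌋` times, unless its first blocker takes one of the `|V| - Σ_c ⌊η(c)/t⌋` bonus slots
instead, which raises the count to `⌈η(c)/t⌉`. Letting each vertex spread weight `1/t` over its
list and the blockers fill the rest gives a doubly stochastic matrix, and Hall's theorem yields a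
perfect matching in its support.

Lower bound: a proportionally `k`-choosable graph is `k`-colourable (take all lists equal), and a
component with `t` vertices is a clique.
-/

theorem exists_bijective_apply_ne_zero_of_doublyStochastic {ι α R : Type*} [Fintype ι]
    [Fintype α] [Field R] [LinearOrder R] [IsStrictOrderedRing R] (w : ι → α → R)
    (hw : ∀ i a, 0 ≤ w i a) (hrow : ∀ i, ∑ a, w i a = 1) (hcol : ∀ a, ∑ i, w i a = 1) :
    ∃ f : ι → α, Function.Bijective f ∧ ∀ i, w i (f i) ≠ 0 := by
  classical
  have hall (s : Finset ι) : #s ≤ #(s.biUnion fun i => {a | w i a ≠ 0}) := by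
    set N := s.biUnion fun i => {a | w i a ≠ 0}
    have : (#s : R) ≤ #N := calc
      (#s : R) = ∑ i ∈ s, ∑ a, w i a := by simp [hrow]
      _ = ∑ a ∈ N, ∑ i ∈ s, w i a := by
        rw [sum_comm]
        refine (sum_subset (subset_univ _) fun a _ ha => sum_eq_zero fun i hi => ?_).symm
        by_contra h
        exact ha (mem_biUnion.2 ⟨i, hi, by simpa using h⟩)
      _ ≤ ∑ a ∈ N, ∑ i, w i a :=
        sum_le_sum fun a _ => sum_le_sum_of_subset_of_nonneg (subset_univ _) fun i _ _ => hw i a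
      _ = #N := by simp [hcol]
    exact_mod_cast this
  obtain ⟨f, hinj, hf⟩ := (all_card_le_biUnion_card_iff_exists_injective _).1 hall
  have hcard : (Fintype.card ι : R) = Fintype.card α := calc
    (Fintype.card ι : R) = ∑ i, ∑ a, w i a := by simp [hrow]
    _ = ∑ a, ∑ i, w i a := sum_comm
    _ = Fintype.card α := by simp [hcol]
  refine ⟨f, (Fintype.bijective_iff_injective_and_card f).2 ⟨hinj, by exact_mod_cast hcard⟩,
    fun i => by simpa using hf i⟩

theorem Nat.add_sub_one_div_eq_div_add_one {a t : ℕ} (ht : 0 < t) (h : a % t ≠ 0) :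
    (a + t - 1) / t = a / t + 1 := by
  have hdiv := Nat.div_add_mod a t
  have hmod := Nat.mod_lt a ht
  apply Nat.div_eq_of_lt_le
  · rw [add_mul, one_mul, mul_comm]; omega
  · rw [add_mul, add_mul, one_mul, mul_comm]; omega

lemma card_filter_sum {α β : Type*} [Fintype α] [Fintype β] (p : α ⊕ β → Prop)
    [DecidablePred p] : #{x | p x} = #{a | p (.inl a)} + #{b | p (.inr b)} := by
  simp only [card_filter, Fintype.sum_sum_type]

namespace ProportionalChoice

variable {V ι : Type*} [Fintype V] [DecidableEq ι] (part : V → ι) (L : V → Finset ℕ) (t : ℕ)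

def palette : Finset ℕ := univ.biUnion L

lemma mem_palette {v : V} {c : ℕ} (h : c ∈ L v) : c ∈ palette L :=
  mem_biUnion.2 ⟨v, mem_univ v, h⟩

def partEta (i : ι) (c : ℕ) : ℕ := #{v | c ∈ L v ∧ part v = i}

variable {part L t} in
lemma partEta_le (hpart : ∀ i, #{v | part v = i} ≤ t) (i : ι) (c : ℕ) :
    partEta part L i c ≤ t :=
  (card_le_card fun v hv => by simp only [mem_filter] at hv ⊢; exact ⟨hv.1, hv.2.2⟩).trans
    (hpart i)

variable {part L t} in
lemma one_sub_partEta_div_nonneg (ht : 0 < t) (hpart : ∀ i, #{v | part v = i} ≤ t) (i : ι)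
    (c : ℕ) : 0 ≤ 1 - (partEta part L i c : ℚ) / t := by
  rw [sub_nonneg, div_le_one (by exact_mod_cast ht)]
  exact_mod_cast partEta_le hpart i c

variable [Fintype ι]

variable (ι) in
def numBlockers (c : ℕ) : ℕ := Fintype.card ι - eta L c / t

def numBonus : ℕ := Fintype.card V - ∑ c ∈ palette L, eta L c / t

variable {part L t}

lemma sum_partEta (c : ℕ) : ∑ i, partEta part L i c = eta L c := by
  rw [eta, card_eq_sum_card_fiberwise fun v _ => mem_univ (part v)]
  simp only [partEta, filter_filter]

lemma eta_le_mul_card (hpart : ∀ i, #{v | part v = i} ≤ t) (c : ℕ) :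
    eta L c ≤ t * Fintype.card ι := by
  rw [← sum_partEta (part := part), mul_comm, ← smul_eq_mul, ← card_univ]
  exact sum_le_card_nsmul _ _ _ fun i _ => partEta_le hpart i c

lemma eta_div_le_card (hpart : ∀ i, #{v | part v = i} ≤ t) (c : ℕ) :
    eta L c / t ≤ Fintype.card ι :=
  Nat.div_le_of_le_mul (eta_le_mul_card hpart c)

lemma eta_mod_eq_zero_of_numBlockers_eq_zero (hpart : ∀ i, #{v | part v = i} ≤ t) {c : ℕ}
    (h : numBlockers ι L t c = 0) : eta L c % t = 0 := by
  have hle := eta_le_mul_card (L := L) hpart c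
  have hq : eta L c / t = Fintype.card ι := by
    have := eta_div_le_card (L := L) hpart c
    unfold numBlockers at h
    omega
  have := Nat.div_add_mod (eta L c) t
  rw [hq] at this
  omega

lemma sum_eta_palette (hL : ∀ v, #(L v) = t) :
    ∑ c ∈ palette L, eta L c = t * Fintype.card V := by
  have hdc := sum_card_bipartiteAbove_eq_sum_card_bipartiteBelow (s := univ) (t := palette L)
    (fun v c => c ∈ L v)
  have habove (v : V) : (palette L).bipartiteAbove (fun v c => c ∈ L v) v = L v :=
    filter_mem_eq_inter.trans (inter_eq_right.2 fun _ => mem_palette L)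
  simp only [habove, hL, sum_const, card_univ, smul_eq_mul] at hdc
  rw [mul_comm, hdc]
  rfl

lemma mul_numBonus (hL : ∀ v, #(L v) = t) :
    t * numBonus L t = ∑ c ∈ palette L, eta L c % t := by
  have h := sum_eta_palette hL
  rw [← sum_congr rfl fun c _ => Nat.div_add_mod (eta L c) t, sum_add_distrib, ← mul_sum] at h
  rw [numBonus, Nat.mul_sub]
  omega

lemma eta_mod_eq_zero_of_numBonus_eq_zero (hL : ∀ v, #(L v) = t) (h : numBonus L t = 0)
    {c : ℕ} (hc : c ∈ palette L) : eta L c % t = 0 := by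
  have := mul_numBonus hL
  rw [h, mul_zero, eq_comm, sum_eq_zero_iff] at this
  exact this c hc

variable (part L t) in
noncomputable def deficit (c : ℕ) : ℚ := ∑ i, (1 - (partEta part L i c : ℚ) / t)

variable (L t) in
noncomputable def blockerShare (c j : ℕ) : ℚ :=
  if j = 0 then 1 - ((eta L c % t : ℕ) : ℚ) / t else 1

lemma deficit_eq (ht : 0 < t) (hpart : ∀ i, #{v | part v = i} ≤ t) (c : ℕ) :
    deficit part L t c = numBlockers ι L t c - ((eta L c % t : ℕ) : ℚ) / t := by
  have hsum : ∑ i, (partEta part L i c : ℚ) = eta L c := by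
    exact_mod_cast sum_partEta (part := part) (L := L) c
  have hdiv : (eta L c : ℚ) = t * (eta L c / t : ℕ) + (eta L c % t : ℕ) := by
    exact_mod_cast (Nat.div_add_mod (eta L c) t).symm
  rw [deficit, numBlockers, Nat.cast_sub (eta_div_le_card hpart c), sum_sub_distrib, ← sum_div,
    hsum, hdiv]
  simp only [sum_const, card_univ, nsmul_eq_mul, mul_one]
  field_simp
  ring

lemma sum_blockerShare (ht : 0 < t) (hpart : ∀ i, #{v | part v = i} ≤ t) (c : ℕ) :
    ∑ j : Fin (numBlockers ι L t c), blockerShare L t c j = deficit part L t c := by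
  rw [deficit_eq ht hpart]
  have hr := eta_mod_eq_zero_of_numBlockers_eq_zero (L := L) hpart (c := c)
  generalize numBlockers ι L t c = n at hr ⊢
  cases n with
  | zero => simp [hr rfl]
  | succ k =>
    rw [Fin.sum_univ_succ]
    simp [blockerShare]
    ring

lemma eta_mod_div_lt_one (ht : 0 < t) (c : ℕ) : ((eta L c % t : ℕ) : ℚ) / t < 1 := by
  rw [div_lt_one (by exact_mod_cast ht)]
  exact_mod_cast Nat.mod_lt _ ht

lemma blockerShare_nonneg (ht : 0 < t) (c j : ℕ) : 0 ≤ blockerShare L t c j := by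
  have := eta_mod_div_lt_one (L := L) ht c
  unfold blockerShare
  split_ifs <;> linarith

lemma deficit_pos (ht : 0 < t) (hpart : ∀ i, #{v | part v = i} ≤ t) {c : ℕ}
    (hc : 0 < numBlockers ι L t c) : 0 < deficit part L t c := by
  have hr := eta_mod_div_lt_one (L := L) ht c
  have : (1 : ℚ) ≤ numBlockers ι L t c := by exact_mod_cast hc
  rw [deficit_eq ht hpart]
  linarith

variable (ι L t) in
abbrev Blocker : Type := Σ c : palette L, Fin (numBlockers ι L t c)

variable (ι L t) in
abbrev Slot := (ι × palette L) ⊕ Fin (numBonus L t)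

/- Blockers of colour `c` fill the part `1 - partEta i c / t` of slot `(i, c)` left free by the
vertices, in proportion to their `blockerShare`; the first one sends the remaining
`(η(c) mod t) / t` evenly to the bonus slots. -/
variable (part L t) in
noncomputable def weight : V ⊕ Blocker ι L t → Slot ι L t → ℚ
  | .inl v, .inl p => if part v = p.1 ∧ p.2.1 ∈ L v then (t : ℚ)⁻¹ else 0
  | .inl _, .inr _ => 0
  | .inr b, .inl p => if b.1 = p.2 then
      (1 - (partEta part L p.1 p.2 : ℚ) / t) * blockerShare L t b.1 b.2 / deficit part L t b.1
      else 0
  | .inr b, .inr _ =>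
      if (b.2 : ℕ) = 0 then ((eta L b.1 % t : ℕ) : ℚ) / (t * numBonus L t) else 0

lemma sum_weight_row_inl (ht : 0 < t) (hL : ∀ v, #(L v) = t) (v : V) :
    ∑ y, weight part L t (.inl v) y = 1 := by
  rw [Fintype.sum_sum_type, Fintype.sum_prod_type]
  simp only [weight, sum_const_zero, add_zero, ite_and]
  rw [Fintype.sum_eq_single (part v) fun i hi => by simp [Ne.symm hi]]
  simp only [if_true]
  rw [sum_coe_sort (palette L) fun c => if c ∈ L v then (t : ℚ)⁻¹ else 0, sum_ite_mem,
    inter_eq_right.2 fun _ => mem_palette L, sum_const, hL, nsmul_eq_mul]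
  field_simp

lemma sum_weight_row_inr (ht : 0 < t) (hL : ∀ v, #(L v) = t) (hpart : ∀ i, #{v | part v = i} ≤ t)
    (b : Blocker ι L t) : ∑ y, weight part L t (.inr b) y = 1 := by
  obtain ⟨c, j⟩ := b
  have hD := deficit_pos ht hpart (Fin.pos j)
  rw [Fintype.sum_sum_type, Fintype.sum_prod_type]
  simp only [weight, Fintype.sum_ite_eq, sum_const, card_univ, Fintype.card_fin, nsmul_eq_mul]
  rw [← sum_div, ← sum_mul, ← deficit, mul_div_cancel_left₀ _ hD.ne']
  by_cases hs : numBonus L t = 0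
  · simp [blockerShare, hs, eta_mod_eq_zero_of_numBonus_eq_zero hL hs c.2]
  · have : (t : ℚ) ≠ 0 := by exact_mod_cast ht.ne'
    have : (numBonus L t : ℚ) ≠ 0 := by exact_mod_cast hs
    rcases eq_or_ne (j : ℕ) 0 with hj | hj
    · simp only [blockerShare, hj, if_true]
      field_simp
      ring
    · simp [blockerShare, hj]

lemma sum_weight_col_inl (ht : 0 < t) (hpart : ∀ i, #{v | part v = i} ≤ t)
    (p : ι × palette L) : ∑ x, weight part L t x (.inl p) = 1 := by
  obtain ⟨i, c⟩ := p
  rw [Fintype.sum_sum_type, Fintype.sum_sigma, Fintype.sum_eq_single c fun c' hc' => by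
    simp [weight, hc']]
  simp only [weight, if_true]
  rw [← sum_filter, sum_const, ← sum_div, ← mul_sum, sum_blockerShare ht hpart, nsmul_eq_mul]
  have hcount : #{v | part v = i ∧ c.1 ∈ L v} = partEta part L i c := by
    simp only [partEta, and_comm]
  have hterm : (1 - (partEta part L i c : ℚ) / t) * deficit part L t c / deficit part L t c
      = 1 - (partEta part L i c : ℚ) / t := by
    rcases eq_or_ne (deficit part L t c) 0 with h0 | h0
    · rw [deficit, sum_eq_zero_iff_of_nonneg fun i _ => one_sub_partEta_div_nonneg ht hpart i c]
        at h0
      simp [h0 i (mem_univ i)]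
    · exact mul_div_cancel_right₀ _ h0
  rw [hcount, hterm]
  field_simp
  ring

lemma sum_weight_col_inr (ht : 0 < t) (hL : ∀ v, #(L v) = t) (hpart : ∀ i, #{v | part v = i} ≤ t)
    (g : Fin (numBonus L t)) : ∑ x, weight part L t x (.inr g) = 1 := by
  have hbonus (c : palette L) : ∑ j : Fin (numBlockers ι L t c),
      (if (j : ℕ) = 0 then ((eta L c % t : ℕ) : ℚ) / (t * numBonus L t) else 0)
      = ((eta L c % t : ℕ) : ℚ) / (t * numBonus L t) := by
    have hr := eta_mod_eq_zero_of_numBlockers_eq_zero (L := L) hpart (c := c)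
    generalize numBlockers ι L t c = n at hr ⊢
    cases n with
    | zero => simp [hr rfl]
    | succ k => simp
  have hsum : ∑ c ∈ palette L, ((eta L c % t : ℕ) : ℚ) = t * numBonus L t := by
    exact_mod_cast (mul_numBonus hL).symm
  have : (t : ℚ) * numBonus L t ≠ 0 := by exact_mod_cast (Nat.mul_pos ht g.pos).ne'
  rw [Fintype.sum_sum_type, Fintype.sum_sigma]
  simp only [weight, sum_const_zero, zero_add, hbonus]
  rw [sum_coe_sort (palette L) fun c => ((eta L c % t : ℕ) : ℚ) / (t * numBonus L t), ← sum_div,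
    hsum, div_self this]

lemma weight_nonneg (ht : 0 < t) (hpart : ∀ i, #{v | part v = i} ≤ t) (x : V ⊕ Blocker ι L t)
    (y : Slot ι L t) : 0 ≤ weight part L t x y := by
  rcases x with v | ⟨c, j⟩ <;> rcases y with p | g <;> simp only [weight]
  · split_ifs <;> positivity
  · rfl
  · split_ifs
    · refine div_nonneg (mul_nonneg (one_sub_partEta_div_nonneg ht hpart _ _)
        (blockerShare_nonneg ht c j)) ?_
      exact sum_nonneg fun i _ => one_sub_partEta_div_nonneg ht hpart i c
    · rfl
  · split_ifs <;> positivity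

lemma exists_eq_inl_of_weight_inl_ne_zero {v : V} {y : Slot ι L t}
    (h : weight part L t (.inl v) y ≠ 0) : ∃ c : palette L, y = .inl (part v, c) ∧ c.1 ∈ L v := by
  rcases y with ⟨i, c⟩ | g
  · simp only [weight, ne_eq, ite_eq_right_iff, Classical.not_imp] at h
    exact ⟨c, by rw [h.1.1], h.1.2⟩
  · exact absurd rfl h

lemma fst_eq_of_weight_inr_inl_ne_zero {b : Blocker ι L t} {p : ι × palette L}
    (h : weight part L t (.inr b) (.inl p) ≠ 0) : b.1 = p.2 := by
  by_contra hne
  simp [weight, hne] at h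

lemma snd_eq_zero_of_weight_inr_inr_ne_zero {b : Blocker ι L t} {g : Fin (numBonus L t)}
    (h : weight part L t (.inr b) (.inr g) ≠ 0) : (b.2 : ℕ) = 0 ∧ eta L b.1 % t ≠ 0 := by
  by_cases hb : (b.2 : ℕ) = 0
  · refine ⟨hb, fun hr => h ?_⟩
    simp [weight, hr]
  · simp [weight, hb] at h

variable {σ : V ⊕ Blocker ι L t → Slot ι L t}

variable (σ) in
def numBonusBlockers (c : palette L) : ℕ :=
  #{b : Blocker ι L t | b.1 = c ∧ (σ (.inr b)).isRight}

lemma card_fiber_add_numBlockers (hσ : σ.Bijective) (hsupp : ∀ x, weight part L t x (σ x) ≠ 0)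
    {g : V → palette L} (hg : ∀ v, σ (.inl v) = .inl (part v, g v)) (c : palette L) :
    #{v | g v = c} + numBlockers ι L t c = Fintype.card ι + numBonusBlockers σ c := by
  set color : V ⊕ Blocker ι L t → palette L := Sum.elim g Sigma.fst with hcolor_def
  have hcolor (x : V ⊕ Blocker ι L t) (p : ι × palette L) (hx : σ x = .inl p) :
      color x = p.2 := by
    rcases x with v | b
    · rw [hg v, Sum.inl.injEq] at hx
      rw [← hx]
      rfl
    · exact fst_eq_of_weight_inr_inl_ne_zero (hx ▸ hsupp (.inr b))
  have hcard : #{x | color x = c} = #{v | g v = c} + numBlockers ι L t c := by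
    rw [card_filter_sum]
    simp only [hcolor_def, Sum.elim_inl, Sum.elim_inr]
    rw [← Fintype.card_subtype (fun b : Blocker ι L t => b.1 = c),
      Fintype.card_congr (Equiv.sigmaSubtype c), Fintype.card_fin]
  have hleft : Fintype.card ι = #{x | color x = c ∧ (σ x).isLeft} := by
    set e := Equiv.ofBijective σ hσ
    refine card_bij (fun i _ => e.symm (.inl (i, c))) (fun i _ => ?_) (fun i _ j _ h => ?_)
      fun x hx => ?_
    · have : σ (e.symm (.inl (i, c))) = .inl (i, c) := e.apply_symm_apply _
      simp [hcolor _ _ this, this]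
    · simpa using h
    · obtain ⟨-, hxc, hleft⟩ := mem_filter.1 hx
      obtain ⟨p, hp⟩ := Sum.isLeft_iff.1 hleft
      refine ⟨p.1, mem_univ _, e.injective ?_⟩
      rw [e.apply_symm_apply, ← hxc, hcolor x p hp]
      exact hp.symm
  have hright : #{x | color x = c ∧ (σ x).isRight} = numBonusBlockers σ c := by
    simp only [card_filter_sum, hg, hcolor_def, Sum.isRight_inl, Bool.false_eq_true, and_false,
      filter_false, card_empty, zero_add, Sum.elim_inr]
    congr
  rw [← hcard, hleft, ← hright, ← card_filter_add_card_filter_not (fun x => (σ x).isLeft)]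
  simp [filter_filter]

lemma numBonusBlockers_le (hsupp : ∀ x, weight part L t x (σ x) ≠ 0) (c : palette L) :
    numBonusBlockers σ c ≤ if eta L c % t = 0 then 0 else 1 := by
  have key (b : Blocker ι L t) (hb : b.1 = c ∧ (σ (.inr b)).isRight) :
      (b.2 : ℕ) = 0 ∧ eta L c % t ≠ 0 := by
    obtain ⟨g, hg⟩ := Sum.isRight_iff.1 hb.2
    rw [← hb.1]
    exact snd_eq_zero_of_weight_inr_inr_ne_zero (hg ▸ hsupp (.inr b))
  unfold numBonusBlockers
  split_ifs with hr
  · rw [Nat.le_zero, card_eq_zero, filter_eq_empty_iff]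
    exact fun b _ hb => (key b hb).2 hr
  · refine card_le_one.2 fun b hb b' hb' => ?_
    obtain ⟨-, hb⟩ := mem_filter.1 hb
    obtain ⟨-, hb'⟩ := mem_filter.1 hb'
    have hj := (key b hb).1
    have hj' := (key b' hb').1
    obtain ⟨c₁, j₁⟩ := b
    obtain ⟨c₂, j₂⟩ := b'
    obtain ⟨rfl, -⟩ := hb
    obtain ⟨rfl, -⟩ := hb'
    exact congrArg _ (Fin.ext (hj.trans hj'.symm))

theorem exists_proportional_choice (ht : 0 < t) (hL : ∀ v, #(L v) = t)
    (hpart : ∀ i, #{v | part v = i} ≤ t) :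
    ∃ f : V → ℕ, (∀ v, f v ∈ L v) ∧ (∀ u v, part u = part v → f u = f v → u = v) ∧
      ∀ c, (∃ v, c ∈ L v) →
        #{v | f v = c} = eta L c / t ∨ #{v | f v = c} = (eta L c + t - 1) / t := by
  obtain ⟨σ, hσ, hsupp⟩ := exists_bijective_apply_ne_zero_of_doublyStochastic (weight part L t)
    (weight_nonneg ht hpart) (Sum.rec (sum_weight_row_inl ht hL) (sum_weight_row_inr ht hL hpart))
    (Sum.rec (sum_weight_col_inl ht hpart) (sum_weight_col_inr ht hL hpart))
  choose g hg hgL using fun v => exists_eq_inl_of_weight_inl_ne_zero (hsupp (.inl v))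
  refine ⟨fun v => g v, hgL, fun u v huv hc => Sum.inl_injective (hσ.1 ?_), ?_⟩
  · rw [hg, hg, huv, Subtype.ext hc]
  rintro c ⟨v, hv⟩
  have hfiber : #{v | (g v : ℕ) = c} = #{v | g v = ⟨c, mem_palette L hv⟩} := by
    simp only [Subtype.ext_iff]
  have hcount := card_fiber_add_numBlockers hσ hsupp hg ⟨c, mem_palette L hv⟩
  have hbonus := numBonusBlockers_le hsupp ⟨c, mem_palette L hv⟩
  have hq := eta_div_le_card (L := L) hpart c
  rw [hfiber]
  dsimp only [numBlockers] at hcount hbonus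
  by_cases hr : eta L c % t = 0
  · rw [if_pos hr] at hbonus
    omega
  · rw [if_neg hr] at hbonus
    rw [Nat.add_sub_one_div_eq_div_add_one ht hr]
    omega

end ProportionalChoice

namespace ProportionallyChoosable

variable {V : Type*} [Fintype V] {G : SimpleGraph V} {k : ℕ}

lemma colorable (h : ProportionallyChoosable G k) : G.Colorable k := by
  obtain ⟨f, hf, hadj, -⟩ := h (fun _ => range k) fun _ => card_range k
  exact ⟨.mk (fun v => ⟨f v, mem_range.1 (hf v)⟩) fun huv heq =>
    hadj _ _ huv (congrArg Fin.val heq)⟩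

end ProportionallyChoosable

lemma proportionallyChoosable_of_ncard_reachable_le {V : Type*} [Fintype V] {G : SimpleGraph V}
    {t : ℕ} (ht : 0 < t) (h : ∀ v, {u | G.Reachable u v}.ncard ≤ t) :
    ProportionallyChoosable G t := by
  classical
  intro L hL
  have hpart (i : G.ConnectedComponent) : #{v | G.connectedComponentMk v = i} ≤ t := by
    induction i using SimpleGraph.ConnectedComponent.ind with | h v => ?_
    rw [← Set.ncard_coe_finset]
    convert h v using 2
    ext u
    simp [SimpleGraph.ConnectedComponent.eq]
  obtain ⟨f, hfL, hinj, hprop⟩ := ProportionalChoice.exists_proportional_choice ht hL hpart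
  exact ⟨f, hfL, fun u v huv heq =>
    huv.ne (hinj u v (SimpleGraph.ConnectedComponent.sound huv.reachable) heq), hprop⟩

theorem stmt_18 {V : Type*} [Fintype V] (G : SimpleGraph V)
    (hclique : ∀ u v : V, G.Reachable u v → u = v ∨ G.Adj u v)
    (t : ℕ) (hmax : ∀ v : V, {u : V | G.Reachable u v}.ncard ≤ t)
    (hex : ∃ v : V, {u : V | G.Reachable u v}.ncard = t) :
    propChoiceNumber G = t := by
  classical
  obtain ⟨v₀, hv₀⟩ := hex
  have hcomp : {u | G.Reachable u v₀} = (({u | G.Reachable u v₀} : Finset V) : Set V) := by simp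
  have ht : 0 < t := hv₀ ▸ (Set.ncard_pos (Set.toFinite _)).2 ⟨v₀, .refl v₀⟩
  have hchoosable := proportionallyChoosable_of_ncard_reachable_le ht hmax
  refine le_antisymm (Nat.sInf_le hchoosable) (le_csInf ⟨t, hchoosable⟩ fun k hk => ?_)
  have hK : G.IsClique (({u | G.Reachable u v₀} : Finset V) : Set V) := by
    intro u hu w hw hne
    simp only [coe_filter, mem_univ, true_and, Set.mem_ofPred_eq] at hu hw
    exact (hclique u w (hu.trans hw.symm)).resolve_left hne
  rw [← hv₀, hcomp, Set.ncard_coe_finset]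
  exact hK.card_le_of_colorable hk.colorable
end
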